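/- arXiv:1310.8378 — 5 statements merged into one kernel-verified Lean document; each statement's English description precedes it below -/
import Mathlib

section
/- There is an absolute constant C > 0 such that for every positive integer k, every k-permutation π and every positive integer n, S_n(π) ≤ 2^{C·k·n}. -/
open Filter

/-- A binary matrix `A` contains a binary matrix `P` (as a submatrix pattern):
there are strictly increasing choices of rows and columns such that `A` has a
one wherever `P` does. -/
def ContainsMat {k l m n : ℕ} (P : Fin k → Fin l → Bool) (A : Fin m → Fin n → Bool) : Prop :=
  ∃ (r : Fin k → Fin m) (c : Fin l → Fin n), StrictMono r ∧ StrictMono c ∧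
    ∀ i j, P i j = true → A (r i) (c j) = true

/-- The permutation matrix of a permutation of `{1,…,k}`. -/
def permMatrix {k : ℕ} (π : Equiv.Perm (Fin k)) : Fin k → Fin k → Bool :=
  fun i j => decide (π i = j)

/-- The mass of a binary matrix: the number of its one-entries. -/
def mass {m n : ℕ} (A : Fin m → Fin n → Bool) : ℕ :=
  (Finset.univ.filter fun p : Fin m × Fin n => A p.1 p.2 = true).card

/-- A binary matrix avoids a permutation if it avoids its permutation matrix. -/
def AvoidsPerm {k m n : ℕ} (A : Fin m → Fin n → Bool) (π : Equiv.Perm (Fin k)) : Prop :=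
  ¬ ContainsMat (permMatrix π) A

/-- `ex n π`: the maximum mass of an `n × n` binary matrix avoiding `π`. -/
noncomputable def exP {k : ℕ} (n : ℕ) (π : Equiv.Perm (Fin k)) : ℕ :=
  sSup {m | ∃ A : Fin n → Fin n → Bool, AvoidsPerm A π ∧ mass A = m}

/-- `ex n U` for a set `U` of permutations: the maximum mass of an `n × n`
binary matrix avoiding every permutation in `U`. -/
noncomputable def exU {k : ℕ} (n : ℕ) (U : Finset (Equiv.Perm (Fin k))) : ℕ :=
  sSup {m | ∃ A : Fin n → Fin n → Bool, (∀ π ∈ U, AvoidsPerm A π) ∧ mass A = m}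

/-- An `n`-permutation `σ` contains a `k`-permutation `π`. -/
def PermContains {n k : ℕ} (σ : Equiv.Perm (Fin n)) (π : Equiv.Perm (Fin k)) : Prop :=
  ∃ x : Fin k → Fin n, StrictMono x ∧ ∀ i j, σ (x i) < σ (x j) ↔ π i < π j

/-- `S n π`: the number of `n`-permutations avoiding `π`. -/
noncomputable def SP {k : ℕ} (n : ℕ) (π : Equiv.Perm (Fin k)) : ℕ :=
  Nat.card {σ : Equiv.Perm (Fin n) // ¬ PermContains σ π}

/-- `S n U`: the number of `n`-permutations avoiding every permutation in `U`. -/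
noncomputable def SU {k : ℕ} (n : ℕ) (U : Finset (Equiv.Perm (Fin k))) : ℕ :=
  Nat.card {σ : Equiv.Perm (Fin n) // ∀ π ∈ U, ¬ PermContains σ π}

/-- `T n π`: the number of `n × n` binary matrices avoiding `π`. -/
noncomputable def TP {k : ℕ} (n : ℕ) (π : Equiv.Perm (Fin k)) : ℕ :=
  Nat.card {A : Fin n → Fin n → Bool // AvoidsPerm A π}

/-- `P` is an interval minor of `A`: there are ordered disjoint row intervals
`[rlo a, rhi a]` and column intervals `[clo b, chi b]` such that wherever `P`
has a one, the corresponding block of `A` contains a one. -/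
def IntervalMinor {k l m n : ℕ} (P : Fin k → Fin l → Bool) (A : Fin m → Fin n → Bool) : Prop :=
  ∃ (rlo rhi : Fin k → Fin m) (clo chi : Fin l → Fin n),
    (∀ a, rlo a ≤ rhi a) ∧ (∀ a b, a < b → rhi a < rlo b) ∧
    (∀ a, clo a ≤ chi a) ∧ (∀ a b, a < b → chi a < clo b) ∧
    ∀ a b, P a b = true → ∃ i j, rlo a ≤ i ∧ i ≤ rhi a ∧ clo b ≤ j ∧ j ≤ chi b ∧ A i j = true

/-- The all-ones `k × l` binary matrix. -/
def J (k l : ℕ) : Fin k → Fin l → Bool := fun _ _ => true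

/-- `m n P`: the maximum mass of an `n × n` binary matrix avoiding `P` as an
interval minor. -/
noncomputable def mP {k l : ℕ} (n : ℕ) (P : Fin k → Fin l → Bool) : ℕ :=
  sSup {m | ∃ A : Fin n → Fin n → Bool, ¬ IntervalMinor P A ∧ mass A = m}

/-- `f_P(t,s)`: the supremum (in `ℕ∞`) of those `N` for which there is an
`N × t` binary matrix with at least `s` ones in each row avoiding `P` as an
interval minor. -/
noncomputable def fP {k l : ℕ} (P : Fin k → Fin l → Bool) (t s : ℕ) : ℕ∞ :=
  sSup {x : ℕ∞ | ∃ N : ℕ, x = (N : ℕ∞) ∧ ∃ A : Fin N → Fin t → Bool,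
    (∀ i, s ≤ (Finset.univ.filter fun j => A i j = true).card) ∧ ¬ IntervalMinor P A}

/-- `g_P(t,s)`: the supremum (in `ℕ∞`) of those `N` for which there is a
`t × N` binary matrix with at least `s` ones in each column avoiding `P` as an
interval minor. -/
noncomputable def gP {k l : ℕ} (P : Fin k → Fin l → Bool) (t s : ℕ) : ℕ∞ :=
  sSup {x : ℕ∞ | ∃ N : ℕ, x = (N : ℕ∞) ∧ ∃ A : Fin t → Fin N → Bool,
    (∀ j, s ≤ (Finset.univ.filter fun i => A i j = true).card) ∧ ¬ IntervalMinor P A}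

/-!
A permutation is encoded by its graph, a set of `n` points in the `n × n` grid; if `σ` avoids
`π`, its graph avoids the all-ones matrix `J_k` as an interval minor. Two facts about `J_k`-free
point sets give `S_n(π) ≤ 2^{O(kn)}` (Fox; Cibulka–Kynčl).

* A `J_k`-free set in the `n × n` grid has at most `2^{8k+9} n` points. Cut the grid into blocks
  of side `w = 4^{k+1}`: the contracted set is `J_k`-free on a smaller grid, a block meeting fewer
  than `2^k` columns and fewer than `2^k` rows carries at most `4^k` points, and a column of blocks
  has at most `k 2^{5k+4}` blocks meeting `2^k` columns, since otherwise `J_k` appears.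
* Halving the grid keeps sets `J_k`-free and every image point has at most four preimages, so the
  sets of at most `N` points with a given image number at most `16^N`.

Halving `W = 8k+9` times costs `2^{4nW}` for sets of `n` points; on the remaining grid of side
about `n / 2^W` the linear mass bound turns the same halving argument into a bound `2^{O(n)}`.
Small `n` are covered by `n! ≤ n^n`.
-/

namespace StanleyWilf

open Finset

/-- `J_k` is an interval minor of `M` (compare `IntervalMinor (J k k)`), witnessed by one point
`p a b` of `M` in each of the `k × k` blocks. -/
def HasGridMinor (k : ℕ) (M : Finset (ℕ × ℕ)) : Prop :=
  ∃ p : Fin k → Fin k → ℕ × ℕ, (∀ a b, p a b ∈ M) ∧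
    (∀ a a' b b', a < a' → (p a b).1 < (p a' b').1) ∧
    (∀ a a' b b', b < b' → (p a b).2 < (p a' b').2)

section GridMinor

variable {k : ℕ} {M : Finset (ℕ × ℕ)}

theorem HasGridMinor.of_image_prodMap {f g : ℕ → ℕ} (hf : Monotone f) (hg : Monotone g)
    (h : HasGridMinor k (M.image (Prod.map f g))) : HasGridMinor k M := by
  obtain ⟨p, hpM, hrow, hcol⟩ := h
  choose q hqM hqp using fun a b => mem_image.1 (hpM a b)
  refine ⟨q, hqM, fun a a' b b' h => hf.reflect_lt ?_, fun a a' b b' h => hg.reflect_lt ?_⟩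
  · simpa [← hqp] using hrow a a' b b' h
  · simpa [← hqp] using hcol a a' b b' h

theorem HasGridMinor.of_image_swap (h : HasGridMinor k (M.image Prod.swap)) :
    HasGridMinor k M := by
  obtain ⟨p, hpM, hrow, hcol⟩ := h
  refine ⟨fun a b => (p b a).swap, fun a b => ?_,
    fun a a' b b' h => hcol b b' a a' h, fun a a' b b' h => hrow b b' a a' h⟩
  obtain ⟨q, hq, hqp⟩ := mem_image.1 (hpM b a)
  simpa [← hqp] using hq

end GridMinor

/-- `k` rows `i ∈ I`, each with points `x i 0, …, x i (j - 1)` of `F i`, such that every `b`-th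
point lies left of every `b'`-th point when `b < b'`: a `k × j` grid minor whose rows are not
ordered. -/
def HasConfiguration (k j : ℕ) (F : ℕ → Finset ℕ) (I : Finset ℕ) : Prop :=
  ∃ K ⊆ I, #K = k ∧ ∃ x : ℕ → ℕ → ℕ, (∀ i ∈ K, ∀ b < j, x i b ∈ F i) ∧
    ∀ i ∈ K, ∀ i' ∈ K, ∀ b b', b < b' → b' < j → x i b < x i' b'

namespace HasConfiguration

variable {k j : ℕ} {F : ℕ → Finset ℕ} {I : Finset ℕ}

theorem mono {I' : Finset ℕ} (h : HasConfiguration k j F I) (hI : I ⊆ I') :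
    HasConfiguration k j F I' := by
  obtain ⟨K, hKI, hK⟩ := h
  exact ⟨K, hKI.trans hI, hK⟩

theorem snoc (t : ℕ) (h : HasConfiguration k j (fun i => (F i).filter (· < t)) I)
    (hright : ∀ i ∈ I, ∃ y ∈ F i, t ≤ y) : HasConfiguration k (j + 1) F I := by
  obtain ⟨K, hKI, hK, x, hxF, hx⟩ := h
  choose! y hyF hty using hright
  refine ⟨K, hKI, hK, fun i b => if b < j then x i b else y i, fun i hi b hb => ?_,
    fun i hi i' hi' b b' hbb' hb' => ?_⟩
  · dsimp only
    split_ifs with hbj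
    · exact (mem_filter.1 (hxF i hi b hbj)).1
    · exact hyF i (hKI hi)
  · have hbj : b < j := by omega
    simp only [hbj, if_true]
    split_ifs with hbj'
    · exact hx i hi i' hi' b b' hbb' hbj'
    · exact (mem_filter.1 (hxF i hi b hbj)).2.trans_le (hty i' (hKI hi'))

theorem cons (t : ℕ) (h : HasConfiguration k j (fun i => (F i).filter (t ≤ ·)) I)
    (hleft : ∀ i ∈ I, ∃ y ∈ F i, y < t) : HasConfiguration k (j + 1) F I := by
  obtain ⟨K, hKI, hK, x, hxF, hx⟩ := h
  choose! y hyF hyt using hleft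
  refine ⟨K, hKI, hK, fun i b => if b = 0 then y i else x i (b - 1), fun i hi b hb => ?_,
    fun i hi i' hi' b b' hbb' hb' => ?_⟩
  · dsimp only
    split_ifs with hb0
    · exact hyF i (hKI hi)
    · exact (mem_filter.1 (hxF i hi (b - 1) (by omega))).1
  · have hb'0 : b' ≠ 0 := by omega
    simp only [hb'0, if_false]
    split_ifs with hb0
    · exact (hyt i (hKI hi)).trans_le (mem_filter.1 (hxF i' hi' (b' - 1) (by omega))).2
    · exact hx i hi i' hi' (b - 1) (b' - 1) (by omega) (by omega)

end HasConfiguration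

theorem card_lt_of_not_hasConfiguration_zero {k : ℕ} {F : ℕ → Finset ℕ} {I : Finset ℕ}
    (hI : ¬HasConfiguration k 0 F I) : #I < k := by
  by_contra! hk
  obtain ⟨K, hKI, hK⟩ := exists_subset_card_eq hk
  exact hI ⟨K, hKI, hK, fun _ _ => 0, fun _ _ b hb => absurd hb b.not_lt_zero,
    fun _ _ _ _ _ _ _ hb' => absurd hb' (Nat.not_lt_zero _)⟩

/- Split `[lo, lo + 2 ^ (e + 1))` in half. Rows inside one half recurse with the same `j`; a row
meeting both halves has `2 ^ j` points in one of them, where it recurses with `j - 1`, the other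
half supplying the missing point. -/
theorem card_le_of_not_hasConfiguration_succ {k e j lo : ℕ} {F : ℕ → Finset ℕ} {I : Finset ℕ}
    (ih : ∀ (j lo : ℕ) (F : ℕ → Finset ℕ) (I : Finset ℕ),
      (∀ i ∈ I, F i ⊆ Ico lo (lo + 2 ^ e) ∧ 2 ^ j ≤ #(F i)) →
      ¬HasConfiguration k j F I → #I ≤ k * 2 ^ (2 * e + j))
    (hF : ∀ i ∈ I, F i ⊆ Ico lo (lo + 2 ^ (e + 1)) ∧ 2 ^ (j + 1) ≤ #(F i))
    (hI : ¬HasConfiguration k (j + 1) F I) : #I ≤ k * 2 ^ (2 * (e + 1) + (j + 1)) := by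
  set mid := lo + 2 ^ e
  have hwidth : lo + 2 ^ (e + 1) = mid + 2 ^ e := by rw [pow_succ]; omega
  set L := fun i => (F i).filter (· < mid)
  set R := fun i => (F i).filter (mid ≤ ·)
  have hLR : ∀ i, #(L i) + #(R i) = #(F i) := fun i => by
    simpa only [not_lt] using card_filter_add_card_filter_not (s := F i) (· < mid)
  set I₁ := I.filter fun i => ∀ x ∈ F i, x < mid
  set I₂ := I.filter fun i => ∀ x ∈ F i, mid ≤ x
  set I₃ := I.filter fun i => (∃ y ∈ F i, mid ≤ y) ∧ 2 ^ j ≤ #(L i)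
  set I₄ := I.filter fun i => (∃ y ∈ F i, y < mid) ∧ 2 ^ j ≤ #(R i)
  have hcover : I ⊆ I₁ ∪ I₂ ∪ I₃ ∪ I₄ := fun i hi => by
    have hcard := (hF i hi).2
    rw [← hLR, pow_succ] at hcard
    simp only [I₁, I₂, I₃, I₄, mem_union, mem_filter, hi, true_and]
    by_cases hleft : ∀ x ∈ F i, x < mid
    · exact .inl (.inl (.inl hleft))
    by_cases hright : ∀ x ∈ F i, mid ≤ x
    · exact .inl (.inl (.inr hright))
    push Not at hleft hright
    by_cases hLj : 2 ^ j ≤ #(L i)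
    · exact .inl (.inr ⟨hleft, hLj⟩)
    · exact .inr ⟨hright, by omega⟩
  have hFi : ∀ i ∈ I, ∀ x ∈ F i, lo ≤ x ∧ x < mid + 2 ^ e := fun i hi x hx =>
    hwidth ▸ mem_Ico.1 ((hF i hi).1 hx)
  have h₁ : #I₁ ≤ k * 2 ^ (2 * e + (j + 1)) := by
    refine ih (j + 1) lo F I₁ (fun i hi => ⟨fun x hx => ?_, (hF i (mem_filter.1 hi).1).2⟩)
      fun h => hI (h.mono (filter_subset _ _))
    obtain ⟨hi, hleft⟩ := mem_filter.1 hi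
    exact mem_Ico.2 ⟨(hFi i hi x hx).1, hleft x hx⟩
  have h₂ : #I₂ ≤ k * 2 ^ (2 * e + (j + 1)) := by
    refine ih (j + 1) mid F I₂ (fun i hi => ⟨fun x hx => ?_, (hF i (mem_filter.1 hi).1).2⟩)
      fun h => hI (h.mono (filter_subset _ _))
    obtain ⟨hi, hright⟩ := mem_filter.1 hi
    exact mem_Ico.2 ⟨hright x hx, (hFi i hi x hx).2⟩
  have h₃ : #I₃ ≤ k * 2 ^ (2 * e + j) := by
    refine ih j lo L I₃ (fun i hi => ⟨fun x hx => ?_, (mem_filter.1 hi).2.2⟩)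
      fun h => hI ((h.snoc mid fun i hi => (mem_filter.1 hi).2.1).mono (filter_subset _ _))
    obtain ⟨hxF, hxmid⟩ := mem_filter.1 hx
    exact mem_Ico.2 ⟨(hFi i (mem_filter.1 hi).1 x hxF).1, hxmid⟩
  have h₄ : #I₄ ≤ k * 2 ^ (2 * e + j) := by
    refine ih j mid R I₄ (fun i hi => ⟨fun x hx => ?_, (mem_filter.1 hi).2.2⟩)
      fun h => hI ((h.cons mid fun i hi => (mem_filter.1 hi).2.1).mono (filter_subset _ _))
    obtain ⟨hxF, hxmid⟩ := mem_filter.1 hx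
    exact mem_Ico.2 ⟨hxmid, (hFi i (mem_filter.1 hi).1 x hxF).2⟩
  have := card_le_card hcover
  have := card_union_le (I₁ ∪ I₂ ∪ I₃) I₄
  have := card_union_le (I₁ ∪ I₂) I₃
  have := card_union_le I₁ I₂
  have e₁ : k * 2 ^ (2 * (e + 1) + (j + 1)) = 8 * (k * 2 ^ (2 * e + j)) := by ring
  have e₂ : k * 2 ^ (2 * e + (j + 1)) = 2 * (k * 2 ^ (2 * e + j)) := by ring
  omega

theorem card_le_of_not_hasConfiguration (k : ℕ) :
    ∀ (e j lo : ℕ) (F : ℕ → Finset ℕ) (I : Finset ℕ),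
      (∀ i ∈ I, F i ⊆ Ico lo (lo + 2 ^ e) ∧ 2 ^ j ≤ #(F i)) →
      ¬HasConfiguration k j F I → #I ≤ k * 2 ^ (2 * e + j) := by
  intro e
  induction e with
  | zero =>
    rintro (_ | j) lo F I hF hI
    · simpa using (card_lt_of_not_hasConfiguration_zero hI).le
    · suffices I = ∅ by simp [this]
      refine eq_empty_of_forall_notMem fun i hi => ?_
      have hsmall := card_le_card (hF i hi).1
      have hlarge := (hF i hi).2
      have : 2 ≤ 2 ^ (j + 1) := Nat.le_self_pow j.succ_ne_zero 2
      simp only [pow_zero, Nat.card_Ico, add_tsub_cancel_left] at hsmall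
      omega
  | succ e ih =>
    rintro (_ | j) lo F I hF hI
    · exact (card_lt_of_not_hasConfiguration_zero hI).le.trans
        (Nat.le_mul_of_pos_right _ (by positivity))
    exact card_le_of_not_hasConfiguration_succ ih hF hI

def contract (d : ℕ) : ℕ × ℕ → ℕ × ℕ := Prod.map (· / d) (· / d)

def block (d : ℕ) (b : ℕ × ℕ) : Finset (ℕ × ℕ) :=
  Ico (b.1 * d) (b.1 * d + d) ×ˢ Ico (b.2 * d) (b.2 * d + d)

def cell (w : ℕ) (M : Finset (ℕ × ℕ)) (b : ℕ × ℕ) : Finset (ℕ × ℕ) :=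
  M.filter (contract w · = b)

section Contraction

variable {d : ℕ} {M : Finset (ℕ × ℕ)}

theorem HasGridMinor.of_image_contract {k : ℕ} (h : HasGridMinor k (M.image (contract d))) :
    HasGridMinor k M :=
  h.of_image_prodMap (fun _ _ h => Nat.div_le_div_right h) (fun _ _ h => Nat.div_le_div_right h)

theorem image_contract_subset (hd : 0 < d) {m : ℕ} (hM : M ⊆ range (d * m) ×ˢ range (d * m)) :
    M.image (contract d) ⊆ range m ×ˢ range m := fun b hb => by
  obtain ⟨p, hp, rfl⟩ := mem_image.1 hb
  have hp := mem_product.1 (hM hp)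
  simp only [contract, Prod.map, mem_product, mem_range, Nat.div_lt_iff_lt_mul hd] at hp ⊢
  constructor <;> linarith

theorem mem_block_contract (hd : 0 < d) (p : ℕ × ℕ) : p ∈ block d (contract d p) := by
  simp only [block, contract, Prod.map, mem_product, mem_Ico]
  exact ⟨⟨Nat.div_mul_le_self _ _, Nat.lt_div_mul_add hd⟩,
    ⟨Nat.div_mul_le_self _ _, Nat.lt_div_mul_add hd⟩⟩

theorem card_block (d : ℕ) (b : ℕ × ℕ) : #(block d b) = d * d := by
  simp [block]

theorem card_filter_image_contract_eq_le (hd : 0 < d) (S : Finset (Finset (ℕ × ℕ)))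
    (B : Finset (ℕ × ℕ)) : #(S.filter (·.image (contract d) = B)) ≤ 2 ^ (d * d * #B) := calc
  _ ≤ #(B.biUnion (block d)).powerset := card_le_card fun M hM => by
      obtain ⟨-, rfl⟩ := mem_filter.1 hM
      exact mem_powerset.2 fun p hp =>
        mem_biUnion.2 ⟨contract d p, mem_image_of_mem _ hp, mem_block_contract hd p⟩
  _ = 2 ^ #(B.biUnion (block d)) := card_powerset _
  _ ≤ 2 ^ (d * d * #B) := Nat.pow_le_pow_right two_pos <|
      card_biUnion_le.trans (by simp [card_block, mul_comm])

theorem image_snd_cell_subset (hd : 0 < d) (b : ℕ × ℕ) :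
    (cell d M b).image Prod.snd ⊆ Ico (b.2 * d) (b.2 * d + d) := by
  intro y hy
  obtain ⟨p, hp, rfl⟩ := mem_image.1 hy
  have hpb := mem_block_contract hd p
  rw [(mem_filter.1 hp).2, block, mem_product] at hpb
  exact hpb.2

theorem image_snd_cell_image_swap (b : ℕ × ℕ) :
    (cell d (M.image Prod.swap) b.swap).image Prod.snd = (cell d M b).image Prod.fst := by
  ext y
  simp only [cell, contract, mem_image, mem_filter, Prod.exists, Prod.map, Prod.swap,
    Prod.ext_iff]
  aesop

end Contraction

def IsWide (w s : ℕ) (M : Finset (ℕ × ℕ)) (b : ℕ × ℕ) : Prop :=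
  s ≤ #((cell w M b).image Prod.snd)

instance (w s : ℕ) (M : Finset (ℕ × ℕ)) : DecidablePred (IsWide w s M) :=
  fun _ => Nat.decLe _ _

section Wide

variable {k : ℕ} {M : Finset (ℕ × ℕ)}

theorem card_cell_le {w : ℕ} (hw : 0 < w) (s : ℕ) (b : ℕ × ℕ) :
    #(cell w M b) ≤ s * s + (if IsWide w s M b then w * w else 0) +
      (if IsWide w s (M.image Prod.swap) b.swap then w * w else 0) := by
  set rows := (cell w M b).image Prod.fst
  set cols := (cell w M b).image Prod.snd
  have hprod : #(cell w M b) ≤ #rows * #cols := card_product rows cols ▸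
    card_le_card fun p hp => mem_product.2 ⟨mem_image_of_mem _ hp, mem_image_of_mem _ hp⟩
  have hrows : #rows ≤ w := by
    have := card_le_card (image_snd_cell_subset (M := M.image Prod.swap) hw b.swap)
    rwa [image_snd_cell_image_swap, Nat.card_Ico, add_tsub_cancel_left] at this
  have hcols : #cols ≤ w := by simpa using card_le_card (image_snd_cell_subset (M := M) hw b)
  by_cases h₁ : IsWide w s M b <;> by_cases h₂ : IsWide w s (M.image Prod.swap) b.swap <;>
    simp only [h₁, h₂, if_true, if_false] <;>
    simp only [IsWide, image_snd_cell_image_swap] at h₁ h₂ <;> nlinarith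

theorem card_le_of_forall_isWide (hM : ¬HasGridMinor k M) (e c : ℕ) (I : Finset ℕ)
    (hI : ∀ a ∈ I, IsWide (2 ^ e) (2 ^ k) M (a, c)) : #I ≤ k * 2 ^ (2 * e + k) := by
  refine card_le_of_not_hasConfiguration k e k (c * 2 ^ e)
    (fun a => (cell (2 ^ e) M (a, c)).image Prod.snd) I
    (fun a ha => ⟨image_snd_cell_subset (by positivity) (a, c), hI a ha⟩) ?_
  rintro ⟨K, -, hK, x, hxF, hx⟩
  apply hM
  set r := K.orderEmbOfFin hK
  have hpt : ∀ a b : Fin k, ∃ p ∈ cell (2 ^ e) M (r a, c), p.2 = x (r a) b :=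
    fun a b => mem_image.1 (hxF _ (K.orderEmbOfFin_mem hK a) b b.2)
  choose p hpcell hpx using hpt
  have hrow : ∀ a b, (p a b).1 / 2 ^ e = r a := fun a b =>
    congrArg Prod.fst (mem_filter.1 (hpcell a b)).2
  refine ⟨p, fun a b => (mem_filter.1 (hpcell a b)).1, fun a a' b b' h => ?_,
    fun a a' b b' h => ?_⟩
  · exact Nat.lt_of_div_lt_div (hrow a b ▸ hrow a' b' ▸ r.strictMono h)
  · rw [hpx, hpx]
    exact hx _ (K.orderEmbOfFin_mem hK a) _ (K.orderEmbOfFin_mem hK a') b b' h b'.2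

theorem card_filter_isWide_le (hM : ¬HasGridMinor k M) (e m : ℕ) (B : Finset (ℕ × ℕ))
    (hB : ∀ b ∈ B, b.2 < m) :
    #(B.filter (IsWide (2 ^ e) (2 ^ k) M)) ≤ m * (k * 2 ^ (2 * e + k)) := by
  rw [card_eq_sum_card_fiberwise (f := Prod.snd) (t := range m)
    fun b hb => mem_range.2 (hB b (mem_filter.1 hb).1)]
  refine (sum_le_sum fun c _ => ?_).trans_eq (by rw [sum_const, card_range, smul_eq_mul])
  set S := (B.filter (IsWide (2 ^ e) (2 ^ k) M)).filter (·.2 = c)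
  have hS : ∀ b ∈ S, b = (b.1, c) ∧ IsWide (2 ^ e) (2 ^ k) M b := fun b hb => by
    simp only [S, mem_filter] at hb
    exact ⟨Prod.ext rfl hb.2, hb.1.2⟩
  rw [← card_image_of_injOn (f := Prod.fst) fun b hb b' hb' h =>
    (hS b hb).1.trans (h ▸ (hS b' hb').1.symm)]
  refine card_le_of_forall_isWide hM e c _ fun a ha => ?_
  obtain ⟨b, hb, rfl⟩ := mem_image.1 ha
  exact (hS b hb).1 ▸ (hS b hb).2

theorem card_le_of_image_contract_subset (hM : ¬HasGridMinor k M) (e m : ℕ)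
    (hA : M.image (contract (2 ^ e)) ⊆ range m ×ˢ range m) :
    #M ≤ #(M.image (contract (2 ^ e))) * (2 ^ k * 2 ^ k) +
      2 * m * (k * 2 ^ (2 * e + k)) * (2 ^ e * 2 ^ e) := by
  set A := M.image (contract (2 ^ e))
  set wide := A.filter (IsWide (2 ^ e) (2 ^ k) M)
  set tall := A.filter fun b => IsWide (2 ^ e) (2 ^ k) (M.image Prod.swap) b.swap
  have hwide : #wide ≤ m * (k * 2 ^ (2 * e + k)) :=
    card_filter_isWide_le hM e m A fun b hb => mem_range.1 (mem_product.1 (hA hb)).2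
  have htall : #tall ≤ m * (k * 2 ^ (2 * e + k)) := by
    refine (card_le_card_of_injOn Prod.swap (t := (A.image Prod.swap).filter (IsWide _ _ _))
      (fun b hb => ?_) Prod.swap_injective.injOn).trans
      (card_filter_isWide_le (fun h => hM h.of_image_swap) e m _ fun b hb => ?_)
    · obtain ⟨hbA, hb⟩ := mem_filter.1 hb
      exact mem_filter.2 ⟨mem_image_of_mem _ hbA, hb⟩
    · obtain ⟨b, hbA, rfl⟩ := mem_image.1 hb
      exact mem_range.1 (mem_product.1 (hA hbA)).1
  calc #M = ∑ b ∈ A, #(cell (2 ^ e) M b) :=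
        card_eq_sum_card_fiberwise fun p hp => mem_image_of_mem _ hp
    _ ≤ ∑ b ∈ A, (2 ^ k * 2 ^ k + (if IsWide (2 ^ e) (2 ^ k) M b then 2 ^ e * 2 ^ e else 0) +
        (if IsWide (2 ^ e) (2 ^ k) (M.image Prod.swap) b.swap then 2 ^ e * 2 ^ e else 0)) :=
      sum_le_sum fun b _ => card_cell_le (by positivity) _ b
    _ = #A * (2 ^ k * 2 ^ k) + (#wide + #tall) * (2 ^ e * 2 ^ e) := by
      simp only [sum_add_distrib, sum_ite, sum_const_zero, sum_const, smul_eq_mul]; ring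
    _ ≤ _ := by gcongr; linarith

end Wide

theorem card_le_of_not_hasGridMinor (k : ℕ) :
    ∀ n (M : Finset (ℕ × ℕ)), M ⊆ range n ×ˢ range n → ¬HasGridMinor k M →
      #M ≤ 2 ^ (8 * k + 9) * n := by
  intro n
  induction n using Nat.strong_induction_on with
  | _ n ih =>
  intro M hMn hM
  set c := 2 ^ (8 * k + 9)
  set w := 2 ^ (2 * k + 2)
  by_cases hnw : n ≤ w
  · calc #M ≤ n * n := by simpa using card_le_card hMn
      _ ≤ c * n := Nat.mul_le_mul_right n (hnw.trans (Nat.pow_le_pow_right two_pos (by omega)))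
  set m := n / w + 1
  have hm : m < n := by
    have hw4 : 4 ≤ w := Nat.pow_le_pow_right two_pos (by omega : 2 ≤ 2 * k + 2)
    have : n / w ≤ n / 4 := Nat.div_le_div_left hw4 four_pos
    omega
  have hnm : n ≤ w * m := (Nat.lt_mul_div_succ n (by positivity)).le
  have hmw : w * m ≤ 2 * n := by
    have := Nat.mul_div_le n w
    rw [mul_add_one]
    omega
  have hA : M.image (contract w) ⊆ range m ×ˢ range m := image_contract_subset (by positivity)
    (hMn.trans (product_subset_product (range_mono hnm) (range_mono hnm)))
  have hAc : #(M.image (contract w)) ≤ c * m := ih m hm _ hA fun h => hM h.of_image_contract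
  have hFc : 8 * w * (k * 2 ^ (2 * (2 * k + 2) + k)) ≤ c := calc
    _ ≤ 8 * w * (2 ^ k * 2 ^ (2 * (2 * k + 2) + k)) := by gcongr; exact Nat.lt_two_pow_self.le
    _ = c := by ring
  set F := k * 2 ^ (2 * (2 * k + 2) + k)
  have hsmall : 4 * (#(M.image (contract w)) * (2 ^ k * 2 ^ k)) ≤ 2 * (c * n) := calc
    _ = #(M.image (contract w)) * w := by ring
    _ ≤ c * m * w := Nat.mul_le_mul_right w hAc
    _ = c * (w * m) := by ring
    _ ≤ c * (2 * n) := Nat.mul_le_mul_left c hmw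
    _ = 2 * (c * n) := by ring
  have hlarge : 2 * (2 * m * F * (w * w)) ≤ c * n := calc
    _ = w * m * (4 * w * F) := by ring
    _ ≤ 2 * n * (4 * w * F) := Nat.mul_le_mul_right _ hmw
    _ = 8 * w * F * n := by ring
    _ ≤ c * n := Nat.mul_le_mul_right n hFc
  have : #M ≤ #(M.image (contract w)) * (2 ^ k * 2 ^ k) + 2 * m * F * (w * w) :=
    card_le_of_image_contract_subset hM (2 * k + 2) m hA
  omega

open scoped Classical in
noncomputable def minorFreeSets (k N m : ℕ) : Finset (Finset (ℕ × ℕ)) :=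
  (range m ×ˢ range m).powerset.filter fun M => ¬HasGridMinor k M ∧ #M ≤ N

section Counting

variable {k N : ℕ}

theorem mem_minorFreeSets {m : ℕ} {M : Finset (ℕ × ℕ)} :
    M ∈ minorFreeSets k N m ↔ M ⊆ range m ×ˢ range m ∧ ¬HasGridMinor k M ∧ #M ≤ N := by
  simp [minorFreeSets]

theorem minorFreeSets_mono {m m' : ℕ} (h : m ≤ m') :
    minorFreeSets k N m ⊆ minorFreeSets k N m' := fun M hM => by
  rw [mem_minorFreeSets] at hM ⊢
  exact ⟨hM.1.trans (product_subset_product (range_mono h) (range_mono h)), hM.2⟩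

theorem card_minorFreeSets_mul_le {d : ℕ} (hd : 0 < d) (m L : ℕ)
    (hL : ∀ B ∈ minorFreeSets k N m, #B ≤ L) :
    #(minorFreeSets k N (d * m)) ≤ 2 ^ (d * d * L) * #(minorFreeSets k N m) := by
  set S := minorFreeSets k N (d * m)
  have hmaps : ∀ M ∈ S, M.image (contract d) ∈ minorFreeSets k N m := fun M hM => by
    obtain ⟨hMm, hM, hMN⟩ := mem_minorFreeSets.1 hM
    exact mem_minorFreeSets.2 ⟨image_contract_subset hd hMm, fun h => hM h.of_image_contract,
      card_image_le.trans hMN⟩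
  calc #S ≤ 2 ^ (d * d * L) * #(S.image (·.image (contract d))) :=
        card_le_mul_card_image _ _ fun B hB => by
          obtain ⟨M, hM, rfl⟩ := mem_image.1 hB
          exact (card_filter_image_contract_eq_le hd S _).trans <|
            Nat.pow_le_pow_right two_pos (Nat.mul_le_mul_left _ (hL _ (hmaps M hM)))
    _ ≤ 2 ^ (d * d * L) * #(minorFreeSets k N m) := by
      gcongr
      intro B hB
      obtain ⟨M, hM, rfl⟩ := mem_image.1 hB
      exact hmaps M hM

theorem card_minorFreeSets_le (k N m : ℕ) :
    #(minorFreeSets k N m) ≤ 2 ^ (12 * 2 ^ (8 * k + 9) * m) := by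
  induction m using Nat.strong_induction_on with
  | _ m ih =>
  set c := 2 ^ (8 * k + 9)
  have hc : 1 ≤ c := Nat.one_le_two_pow
  rcases Nat.lt_or_ge m 2 with hm | hm
  · calc #(minorFreeSets k N m) ≤ #(range m ×ˢ range m).powerset :=
          card_le_card fun M hM => mem_powerset.2 (mem_minorFreeSets.1 hM).1
      _ = 2 ^ (m * m) := by simp
      _ ≤ 2 ^ (12 * c * m) := Nat.pow_le_pow_right two_pos (by interval_cases m <;> omega)
  set m' := (m + 1) / 2
  calc #(minorFreeSets k N m) ≤ #(minorFreeSets k N (2 * m')) :=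
        card_le_card (minorFreeSets_mono (by omega))
    _ ≤ 2 ^ (2 * 2 * (c * m')) * #(minorFreeSets k N m') :=
        card_minorFreeSets_mul_le two_pos m' _ fun B hB => by
          obtain ⟨hBm, hB, -⟩ := mem_minorFreeSets.1 hB
          exact card_le_of_not_hasGridMinor k m' B hBm hB
    _ ≤ 2 ^ (2 * 2 * (c * m')) * 2 ^ (12 * c * m') := by gcongr; exact ih m' (by omega)
    _ = 2 ^ (c * (16 * m')) := by rw [← pow_add]; ring_nf
    _ ≤ 2 ^ (12 * c * m) := Nat.pow_le_pow_right two_pos <|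
        (Nat.mul_le_mul_left c (by omega : 16 * m' ≤ 12 * m)).trans_eq (by ring)

theorem card_minorFreeSets_two_pow_mul_le (k N W m : ℕ) :
    #(minorFreeSets k N (2 ^ W * m)) ≤ 2 ^ (4 * N * W) * #(minorFreeSets k N m) := by
  induction W with
  | zero => simp
  | succ W ih =>
    calc #(minorFreeSets k N (2 ^ (W + 1) * m)) = #(minorFreeSets k N (2 * (2 ^ W * m))) := by
          rw [pow_succ, mul_comm _ 2, mul_assoc]
      _ ≤ 2 ^ (2 * 2 * N) * #(minorFreeSets k N (2 ^ W * m)) :=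
          card_minorFreeSets_mul_le two_pos _ N fun B hB => (mem_minorFreeSets.1 hB).2.2
      _ ≤ 2 ^ (2 * 2 * N) * (2 ^ (4 * N * W) * #(minorFreeSets k N m)) := by gcongr
      _ = 2 ^ (4 * N * (W + 1)) * #(minorFreeSets k N m) := by
          rw [← mul_assoc, ← pow_add]; ring_nf

end Counting

def permGraph {n : ℕ} (σ : Equiv.Perm (Fin n)) : Finset (ℕ × ℕ) :=
  univ.image fun i : Fin n => ((i : ℕ), (σ i : ℕ))

section Permutations

variable {n : ℕ}

theorem mem_permGraph {σ : Equiv.Perm (Fin n)} {p : ℕ × ℕ} :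
    p ∈ permGraph σ ↔ ∃ i : Fin n, ((i : ℕ), (σ i : ℕ)) = p := by
  simp [permGraph]

theorem permGraph_subset (σ : Equiv.Perm (Fin n)) : permGraph σ ⊆ range n ×ˢ range n := by
  intro p hp
  obtain ⟨i, rfl⟩ := mem_permGraph.1 hp
  simp

theorem card_permGraph (σ : Equiv.Perm (Fin n)) : #(permGraph σ) = n := by
  rw [permGraph, card_image_of_injective _ fun i j h => Fin.ext (congrArg Prod.fst h)]
  simp

theorem permGraph_injective : Function.Injective (permGraph (n := n)) := by
  intro σ τ h
  ext i
  obtain ⟨j, hj⟩ := mem_permGraph.1 (h ▸ mem_permGraph.2 ⟨i, rfl⟩ :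
    ((i : ℕ), (σ i : ℕ)) ∈ permGraph τ)
  obtain rfl : j = i := Fin.ext (congrArg Prod.fst hj)
  exact (congrArg Prod.snd hj).symm

theorem permContains_of_hasGridMinor {k : ℕ} (σ : Equiv.Perm (Fin n)) (π : Equiv.Perm (Fin k))
    (h : HasGridMinor k (permGraph σ)) : PermContains σ π := by
  obtain ⟨p, hpM, hrow, hcol⟩ := h
  choose x hx using fun a => mem_permGraph.1 (hpM a (π a))
  have hlt : ∀ a b, π a < π b → σ (x a) < σ (x b) := fun a b h => by
    simpa [← hx a, ← hx b] using hcol a b (π a) (π b) h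
  refine ⟨x, fun a b h => ?_, fun a b => ⟨fun h => ?_, hlt a b⟩⟩
  · simpa [← hx a, ← hx b] using hrow a b (π a) (π b) h
  · rcases lt_trichotomy (π a) (π b) with hab | hab | hab
    · exact hab
    · exact absurd h (π.injective hab ▸ lt_irrefl _)
    · exact absurd h (hlt b a hab).not_gt

theorem SP_le_card_minorFreeSets {k : ℕ} (n : ℕ) (π : Equiv.Perm (Fin k)) :
    SP n π ≤ #(minorFreeSets k n n) := by
  rw [SP, ← Nat.card_eq_finsetCard]
  refine Nat.card_le_card_of_injective (fun σ => ⟨permGraph σ.1, mem_minorFreeSets.2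
    ⟨permGraph_subset _, fun h => σ.2 (permContains_of_hasGridMinor _ π h),
      (card_permGraph _).le⟩⟩) fun σ τ h => Subtype.ext (permGraph_injective ?_)
  exact congrArg Subtype.val h

theorem SP_le_factorial {k : ℕ} (n : ℕ) (π : Equiv.Perm (Fin k)) : SP n π ≤ n.factorial :=
  (Nat.card_le_card_of_injective _ Subtype.val_injective).trans_eq (by simp [Fintype.card_perm])

theorem SP_le_two_pow {k : ℕ} (hk : 0 < k) (n : ℕ) (π : Equiv.Perm (Fin k)) :
    SP n π ≤ 2 ^ (100 * k * n) := by
  set W := 8 * k + 9 with hW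
  rcases le_or_gt n (2 ^ W) with hn | hn
  · calc SP n π ≤ n.factorial := SP_le_factorial n π
      _ ≤ n ^ n := Nat.factorial_le_pow n
      _ ≤ (2 ^ W) ^ n := Nat.pow_le_pow_left hn n
      _ = 2 ^ (W * n) := (pow_mul 2 W n).symm
      _ ≤ 2 ^ (100 * k * n) := Nat.pow_le_pow_right two_pos (Nat.mul_le_mul_right n (by omega))
  set m := n / 2 ^ W + 1
  have hnm : n ≤ 2 ^ W * m := (Nat.lt_mul_div_succ n (by positivity)).le
  have hm : 2 ^ W * m ≤ 2 * n := by
    have := Nat.mul_div_le n (2 ^ W)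
    rw [mul_add_one]
    omega
  calc SP n π ≤ #(minorFreeSets k n n) := SP_le_card_minorFreeSets n π
    _ ≤ #(minorFreeSets k n (2 ^ W * m)) := card_le_card (minorFreeSets_mono hnm)
    _ ≤ 2 ^ (4 * n * W) * 2 ^ (12 * 2 ^ W * m) :=
      (card_minorFreeSets_two_pow_mul_le k n W m).trans <| by
        gcongr; exact card_minorFreeSets_le k n m
    _ = 2 ^ (4 * n * W + 12 * (2 ^ W * m)) := by rw [← pow_add]; ring_nf
    _ ≤ 2 ^ (100 * k * n) := Nat.pow_le_pow_right two_pos <| by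
      have : 4 * n * W = 32 * (k * n) + 36 * n := by rw [hW]; ring
      have : 100 * k * n = 100 * (k * n) := by ring
      have : n ≤ k * n := Nat.le_mul_of_pos_left n hk
      omega

end Permutations

end StanleyWilf

/-- There is an absolute constant `C > 0` such that for every
positive integer `k`, every `k`-permutation `π` and every positive integer `n`,
`S_n(π) ≤ 2^{C·k·n}`. -/
theorem stmt3 :
    ∃ C : ℝ, 0 < C ∧ ∀ k : ℕ, 0 < k → ∀ π : Equiv.Perm (Fin k), ∀ n : ℕ, 0 < n →
      (SP n π : ℝ) ≤ (2 : ℝ) ^ (C * (k : ℝ) * (n : ℝ)) := by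
  refine ⟨100, by norm_num, fun k hk π n _ => ?_⟩
  calc (SP n π : ℝ) ≤ ((2 ^ (100 * k * n) : ℕ) : ℝ) := by
        exact_mod_cast StanleyWilf.SP_le_two_pow hk n π
    _ = (2 : ℝ) ^ (100 * (k : ℝ) * (n : ℝ)) := by
        rw [show (100 : ℝ) * k * n = ((100 * k * n : ℕ) : ℝ) by push_cast; ring,
          Real.rpow_natCast, Nat.cast_pow, Nat.cast_ofNat]
end

section
/- Let r and ℓ be positive integers and q a real number with 0 < q < 1/2 and 3 ≤ r ≤ qℓ/4, and let N = 2^r. Then there exists an N×N binary matrix M with mass at least (1−q)^{(r+1)²}·N² − 1 that avoids J_ℓ as an interval minor. -/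
open Filter

/-!
Choose independently, for every pair (row dyadic interval, column dyadic interval) of `[0, 2^r)`,
a bit that is `true` with probability `1 - q`, and put a one at `(x, y)` when all `(r + 1)^2`
pairs of dyadic intervals containing `x` and `y` got `true`; the expected mass is
`(1 - q)^((r+1)^2) N^2`. A `J_ℓ` interval minor assigns to each of its row intervals the smallest
dyadic interval containing it, and these are distinct for disjoint intervals; likewise for columns.
So the minor forces the bits of an `ℓ × ℓ` grid of distinct pairs to be `true`, and a union bound
over the at most `((r + 1) N)^(2ℓ) ≤ N^(4ℓ)` such grids bounds its probability by
`N^(4ℓ) (1 - q)^(ℓ^2) ≤ N^(-2)`. Replacing the matrices containing `J_ℓ` by the zero matrix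
therefore costs at most `1` in expected mass.
-/

open Finset

lemma sum_biUnion_le_sum_sum {α ι : Type*} [DecidableEq α] {w : α → ℝ} (hw : ∀ a, 0 ≤ w a)
    (s : Finset ι) (t : ι → Finset α) :
    ∑ a ∈ s.biUnion t, w a ≤ ∑ i ∈ s, ∑ a ∈ t i, w a := by
  rw [← sup_eq_biUnion]
  refine apply_sup_le_sum (f := fun A => ∑ a ∈ A, w a) sum_empty (fun {A B} => ?_) s
  rw [sup_eq_union, ← sum_union_inter]
  exact le_add_of_nonneg_right (sum_nonneg fun a _ => hw a)

section BernoulliProduct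

variable {ι : Type*} [Fintype ι] [DecidableEq ι] {q : ℝ}

def bernoulliWeight (q : ℝ) (ξ : ι → Bool) : ℝ := ∏ i, if ξ i then 1 - q else q

omit [DecidableEq ι] in
lemma bernoulliWeight_nonneg (hq0 : 0 ≤ q) (hq1 : q ≤ 1) (ξ : ι → Bool) :
    0 ≤ bernoulliWeight q ξ :=
  prod_nonneg fun i _ => by split <;> linarith

omit [DecidableEq ι] in
lemma bernoulliWeight_pos (hq0 : 0 < q) (hq1 : q < 1) (ξ : ι → Bool) :
    0 < bernoulliWeight q ξ :=
  prod_pos fun i _ => by split <;> linarith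

lemma sum_bernoulliWeight_forall_true (q : ℝ) (T : Finset ι) :
    ∑ ξ : ι → Bool with ∀ i ∈ T, ξ i = true, bernoulliWeight q ξ = (1 - q) ^ #T := by
  have hevent : ({ξ : ι → Bool | ∀ i ∈ T, ξ i = true} : Finset _) =
      Fintype.piFinset fun i => if i ∈ T then {true} else univ := by
    ext ξ
    simp only [mem_filter, mem_univ, true_and, Fintype.mem_piFinset]
    exact forall_congr' fun i => by split_ifs <;> simp [*]
  simp only [hevent, bernoulliWeight]
  rw [← prod_univ_sum (fun i => if i ∈ T then {true} else univ) fun _ b => if b then 1 - q else q,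
    ← prod_const, ← Fintype.prod_ite_mem T]
  refine prod_congr rfl fun i _ => ?_
  split_ifs <;> simp

lemma sum_bernoulliWeight (q : ℝ) : ∑ ξ : ι → Bool, bernoulliWeight q ξ = 1 := by
  simpa using sum_bernoulliWeight_forall_true q (∅ : Finset ι)

lemma exists_le_of_le_sum_bernoulliWeight_mul (hq0 : 0 < q) (hq1 : q < 1)
    {f : (ι → Bool) → ℝ} {c : ℝ} (h : c ≤ ∑ ξ, bernoulliWeight q ξ * f ξ) :
    ∃ ξ, c ≤ f ξ := by
  rw [← mul_one c, ← sum_bernoulliWeight (ι := ι) q, mul_sum] at h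
  obtain ⟨ξ, -, hξ⟩ :=
    exists_le_of_sum_le (univ_nonempty (α := ι → Bool)) (by simpa only [mul_comm c] using h)
  exact ⟨ξ, le_of_mul_le_mul_left hξ (bernoulliWeight_pos hq0 hq1 ξ)⟩

end BernoulliProduct

def ContainsBiclique {D E : Type*} (ℓ : ℕ) (ξ : D × E → Bool) : Prop :=
  ∃ (f : Fin ℓ → D) (g : Fin ℓ → E), f.Injective ∧ g.Injective ∧ ∀ a b, ξ (f a, g b) = true

open scoped Classical in
lemma sum_bernoulliWeight_containsBiclique_le {D E : Type*} [Fintype D] [Fintype E]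
    [DecidableEq D] [DecidableEq E] {q : ℝ} (hq0 : 0 ≤ q) (hq1 : q ≤ 1) (ℓ : ℕ) :
    ∑ ξ : D × E → Bool with ContainsBiclique ℓ ξ, bernoulliWeight q ξ
      ≤ (Fintype.card D ^ ℓ * Fintype.card E ^ ℓ : ℕ) * (1 - q) ^ (ℓ ^ 2) := by
  let embeddings : Finset ((Fin ℓ → D) × (Fin ℓ → E)) := {fg | fg.1.Injective ∧ fg.2.Injective}
  let cells (fg : (Fin ℓ → D) × (Fin ℓ → E)) : Finset (D × E) := univ.image (Prod.map fg.1 fg.2)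
  have hcells : ∀ fg ∈ embeddings, #(cells fg) = ℓ ^ 2 := by
    intro fg hfg
    simp only [embeddings, mem_filter, mem_univ, true_and] at hfg
    rw [card_image_of_injective _ (hfg.1.prodMap hfg.2), card_univ, Fintype.card_prod,
      Fintype.card_fin, sq]
  have hsubset : ({ξ | ContainsBiclique ℓ ξ} : Finset (D × E → Bool)) ⊆
      embeddings.biUnion fun fg => {ξ | ∀ i ∈ cells fg, ξ i = true} := by
    rintro ξ hξ
    obtain ⟨f, g, hf, hg, hfg⟩ := (mem_filter.1 hξ).2
    simp only [embeddings, cells, mem_biUnion, mem_filter, mem_univ, true_and, mem_image]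
    exact ⟨(f, g), ⟨hf, hg⟩, by rintro _ ⟨ab, rfl⟩; exact hfg ab.1 ab.2⟩
  calc ∑ ξ : D × E → Bool with ContainsBiclique ℓ ξ, bernoulliWeight q ξ
      ≤ ∑ fg ∈ embeddings, ∑ ξ : D × E → Bool with ∀ i ∈ cells fg, ξ i = true,
          bernoulliWeight q ξ := by
        grw [sum_le_sum_of_subset_of_nonneg hsubset fun ξ _ _ => bernoulliWeight_nonneg hq0 hq1 ξ,
          sum_biUnion_le_sum_sum fun ξ => bernoulliWeight_nonneg hq0 hq1 ξ]
    _ = #embeddings * (1 - q) ^ (ℓ ^ 2) := by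
        rw [sum_congr rfl fun fg hfg => by rw [sum_bernoulliWeight_forall_true, hcells fg hfg],
          sum_const, nsmul_eq_mul]
    _ ≤ (Fintype.card D ^ ℓ * Fintype.card E ^ ℓ : ℕ) * (1 - q) ^ (ℓ ^ 2) := by
        refine mul_le_mul_of_nonneg_right ?_ (pow_nonneg (by linarith) _)
        exact_mod_cast (card_filter_le _ _).trans (by simp)

lemma exists_div_two_pow_eq (x y : ℕ) : ∃ k, x / 2 ^ k = y / 2 ^ k :=
  ⟨x + y, by
    rw [Nat.div_eq_of_lt ((Nat.lt_two_pow_self).trans_le (Nat.pow_le_pow_right two_pos (by omega))),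
      Nat.div_eq_of_lt ((Nat.lt_two_pow_self).trans_le (Nat.pow_le_pow_right two_pos (by omega)))]⟩

def dyadicLevel (x y : ℕ) : ℕ := Nat.find (exists_div_two_pow_eq x y)

lemma div_two_pow_dyadicLevel (x y : ℕ) :
    x / 2 ^ dyadicLevel x y = y / 2 ^ dyadicLevel x y :=
  Nat.find_spec (exists_div_two_pow_eq x y)

lemma dyadicLevel_le {x y r : ℕ} (hx : x < 2 ^ r) (hy : y < 2 ^ r) : dyadicLevel x y ≤ r :=
  Nat.find_min' _ (by rw [Nat.div_eq_of_lt hx, Nat.div_eq_of_lt hy])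

lemma div_two_pow_dyadicLevel_of_mem {lo x hi : ℕ} (hlo : lo ≤ x) (hhi : x ≤ hi) :
    x / 2 ^ dyadicLevel lo hi = lo / 2 ^ dyadicLevel lo hi :=
  le_antisymm ((Nat.div_le_div_right hhi).trans (div_two_pow_dyadicLevel lo hi).ge)
    (Nat.div_le_div_right hlo)

/-- One level below the block where `lo` and `hi` first meet, `lo` lies in its left half and `hi`
in its right half; the same holds for `lo'` and `hi'`, which is impossible when `hi < lo'`. -/
lemma div_two_pow_dyadicLevel_ne {lo hi lo' hi' : ℕ} (h : lo ≤ hi) (h' : hi < lo')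
    (h'' : lo' ≤ hi') (hlevel : dyadicLevel lo hi = dyadicLevel lo' hi') :
    lo / 2 ^ dyadicLevel lo hi ≠ lo' / 2 ^ dyadicLevel lo' hi' := by
  have hs := div_two_pow_dyadicLevel lo hi
  have hs' := div_two_pow_dyadicLevel lo' hi'
  rw [← hlevel] at hs' ⊢
  generalize hk : dyadicLevel lo hi = k at hs hs' ⊢
  cases k with
  | zero => simp only [pow_zero, Nat.div_one] at hs hs' ⊢; omega
  | succ k =>
    have hmin : lo / 2 ^ k ≠ hi / 2 ^ k := fun heq =>
      Nat.find_min (exists_div_two_pow_eq lo hi) (show k < dyadicLevel lo hi by omega) heq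
    have hmin' : lo' / 2 ^ k ≠ hi' / 2 ^ k := fun heq =>
      Nat.find_min (exists_div_two_pow_eq lo' hi') (show k < dyadicLevel lo' hi' by omega) heq
    have := Nat.div_le_div_right (c := 2 ^ k) h
    have := Nat.div_le_div_right (c := 2 ^ k) h'.le
    have := Nat.div_le_div_right (c := 2 ^ k) h''
    simp only [pow_succ, ← Nat.div_div_eq_div_mul] at hs hs' ⊢
    omega

section DyadicBlocks

variable {r : ℕ}

/-- `(k, j)` stands for the dyadic interval `[j * 2^k, (j + 1) * 2^k)`; the indices
`j ≥ 2^(r - k)` are never used. -/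
abbrev DyadicBlock (r : ℕ) := Fin (r + 1) × Fin (2 ^ r)

def dyadicBlock (k : Fin (r + 1)) (x : Fin (2 ^ r)) : DyadicBlock r :=
  (k, ⟨x / 2 ^ (k : ℕ), (Nat.div_le_self _ _).trans_lt x.isLt⟩)

def intervalLevel (lo hi : Fin (2 ^ r)) : Fin (r + 1) :=
  ⟨dyadicLevel lo hi, Nat.lt_succ_of_le (dyadicLevel_le lo.isLt hi.isLt)⟩

def intervalBlock (lo hi : Fin (2 ^ r)) : DyadicBlock r := dyadicBlock (intervalLevel lo hi) lo

lemma dyadicBlock_intervalLevel {lo x hi : Fin (2 ^ r)} (hlo : lo ≤ x) (hhi : x ≤ hi) :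
    dyadicBlock (intervalLevel lo hi) x = intervalBlock lo hi := by
  simp only [intervalBlock, dyadicBlock, intervalLevel, Prod.mk.injEq, Fin.mk.injEq, true_and]
  exact div_two_pow_dyadicLevel_of_mem hlo hhi

lemma intervalBlock_ne {lo hi lo' hi' : Fin (2 ^ r)} (h : lo ≤ hi) (h' : hi < lo')
    (h'' : lo' ≤ hi') : intervalBlock lo hi ≠ intervalBlock lo' hi' := by
  simp only [intervalBlock, dyadicBlock, intervalLevel, ne_eq, Prod.mk.injEq, Fin.mk.injEq, not_and]
  exact div_two_pow_dyadicLevel_ne h h' h''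

lemma intervalBlock_injective {ℓ : ℕ} {lo hi : Fin ℓ → Fin (2 ^ r)} (hle : ∀ a, lo a ≤ hi a)
    (hlt : ∀ a b, a < b → hi a < lo b) :
    Function.Injective fun a => intervalBlock (lo a) (hi a) := by
  intro a b hab
  by_contra hne
  rcases lt_or_gt_of_ne hne with h | h
  · exact intervalBlock_ne (hle a) (hlt a b h) (hle b) hab
  · exact intervalBlock_ne (hle b) (hlt b a h) (hle a) hab.symm

def blockMatrix (ξ : DyadicBlock r × DyadicBlock r → Bool) : Fin (2 ^ r) → Fin (2 ^ r) → Bool :=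
  fun x y => decide (∀ k l, ξ (dyadicBlock k x, dyadicBlock l y) = true)

lemma containsBiclique_of_intervalMinor {ℓ : ℕ} {ξ : DyadicBlock r × DyadicBlock r → Bool}
    (h : IntervalMinor (J ℓ ℓ) (blockMatrix ξ)) : ContainsBiclique ℓ ξ := by
  obtain ⟨rlo, rhi, clo, chi, hr, hr', hc, hc', hblock⟩ := h
  refine ⟨fun a => intervalBlock (rlo a) (rhi a), fun b => intervalBlock (clo b) (chi b),
    intervalBlock_injective hr hr', intervalBlock_injective hc hc', fun a b => ?_⟩
  obtain ⟨x, y, hx, hx', hy, hy', hxy⟩ := hblock a b rfl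
  have := of_decide_eq_true hxy (intervalLevel (rlo a) (rhi a)) (intervalLevel (clo b) (chi b))
  rwa [dyadicBlock_intervalLevel hx hx', dyadicBlock_intervalLevel hy hy'] at this

end DyadicBlocks

section Mass

variable {m n : ℕ}

lemma mass_le (A : Fin m → Fin n → Bool) : mass A ≤ m * n :=
  (card_filter_le _ _).trans (by simp)

lemma mass_false : mass (fun _ _ => false : Fin m → Fin n → Bool) = 0 := by
  simp [mass]

lemma sum_mul_mass {α : Type*} [Fintype α] (w : α → ℝ) (A : α → Fin m → Fin n → Bool) :
    ∑ a, w a * mass (A a) = ∑ p : Fin m × Fin n, ∑ a with A a p.1 p.2 = true, w a := by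
  simp only [mass, card_filter, Nat.cast_sum, Nat.cast_ite, Nat.cast_one, Nat.cast_zero, mul_sum,
    mul_ite, mul_one, mul_zero, sum_filter]
  exact sum_comm

end Mass

section BlockMatrix

variable {r : ℕ}

lemma sum_bernoulliWeight_blockMatrix_eq_true (q : ℝ) (x y : Fin (2 ^ r)) :
    ∑ ξ with blockMatrix ξ x y = true, bernoulliWeight q ξ = (1 - q) ^ ((r + 1) ^ 2) := by
  let cells :=
    univ.image fun kl : Fin (r + 1) × Fin (r + 1) => (dyadicBlock kl.1 x, dyadicBlock kl.2 y)
  have hcells : #cells = (r + 1) ^ 2 := by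
    rw [card_image_of_injective _ fun kl kl' h =>
      Prod.ext (congrArg (·.1.1) h) (congrArg (·.2.1) h)]
    simp [sq]
  have hevent (ξ : DyadicBlock r × DyadicBlock r → Bool) :
      blockMatrix ξ x y = true ↔ ∀ i ∈ cells, ξ i = true := by
    simp only [blockMatrix, decide_eq_true_eq, cells, forall_mem_image, mem_univ, true_implies,
      Prod.forall]
  rw [filter_congr fun ξ _ => hevent ξ, sum_bernoulliWeight_forall_true, hcells]

lemma sum_bernoulliWeight_mul_mass_blockMatrix (q : ℝ) :
    ∑ ξ : DyadicBlock r × DyadicBlock r → Bool, bernoulliWeight q ξ * mass (blockMatrix ξ) =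
      (1 - q) ^ ((r + 1) ^ 2) * ((2 ^ r : ℕ) : ℝ) ^ 2 := by
  simp only [sum_mul_mass, sum_bernoulliWeight_blockMatrix_eq_true, sum_const, card_univ,
    Fintype.card_prod, Fintype.card_fin, nsmul_eq_mul]
  push_cast
  ring

end BlockMatrix

lemma two_pow_mul_one_sub_pow_le_one {r ℓ : ℕ} {q : ℝ} (hq0 : 0 ≤ q) (hq1 : q < 1 / 2)
    (hrq : (r : ℝ) ≤ q * ℓ / 4) : (2 : ℝ) ^ (r * (4 * ℓ + 2)) * (1 - q) ^ (ℓ ^ 2) ≤ 1 := by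
  have hlog : Real.log 2 < 0.7 := Real.log_two_lt_d9.trans (by norm_num)
  have hexp : (1 - q) ^ (ℓ ^ 2) ≤ Real.exp (-q) ^ (ℓ ^ 2) :=
    pow_le_pow_left₀ (by linarith) (by linarith [Real.add_one_le_exp (-q)]) _
  have hr : (r : ℝ) ≤ r ^ 2 := by exact_mod_cast Nat.le_self_pow two_ne_zero r
  have hℓ : 0 ≤ (ℓ : ℝ) - 8 * r := by nlinarith
  have hkey : ((r * (4 * ℓ + 2) : ℕ) : ℝ) * Real.log 2 + ((ℓ ^ 2 : ℕ) : ℝ) * -q ≤ 0 := by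
    push_cast
    nlinarith [mul_nonneg (Nat.cast_nonneg r : (0 : ℝ) ≤ r) hℓ, Real.log_pos one_lt_two]
  calc (2 : ℝ) ^ (r * (4 * ℓ + 2)) * (1 - q) ^ (ℓ ^ 2)
      ≤ Real.exp (Real.log 2) ^ (r * (4 * ℓ + 2)) * Real.exp (-q) ^ (ℓ ^ 2) := by
        rw [Real.exp_log two_pos]
        gcongr
    _ ≤ 1 := by
        rw [← Real.exp_nat_mul, ← Real.exp_nat_mul, ← Real.exp_add, Real.exp_le_one_iff]
        exact hkey

open scoped Classical in
lemma sq_mul_sum_bernoulliWeight_intervalMinor_le_one {r ℓ : ℕ} {q : ℝ} (hq0 : 0 ≤ q)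
    (hq1 : q < 1 / 2) (hrq : (r : ℝ) ≤ q * ℓ / 4) :
    ((2 ^ r : ℕ) : ℝ) ^ 2 * ∑ ξ : DyadicBlock r × DyadicBlock r → Bool with
      IntervalMinor (J ℓ ℓ) (blockMatrix ξ), bernoulliWeight q ξ ≤ 1 := by
  have hq1' : q ≤ 1 := by linarith
  have hcard : (2 ^ r) ^ 2 * (Fintype.card (DyadicBlock r) ^ ℓ * Fintype.card (DyadicBlock r) ^ ℓ)
      ≤ 2 ^ (r * (4 * ℓ + 2)) := by
    have : Fintype.card (DyadicBlock r) ≤ 2 ^ r * 2 ^ r := by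
      simpa using Nat.lt_two_pow_self
    calc (2 ^ r) ^ 2 * (Fintype.card (DyadicBlock r) ^ ℓ * Fintype.card (DyadicBlock r) ^ ℓ)
        ≤ (2 ^ r) ^ 2 * ((2 ^ r * 2 ^ r) ^ ℓ * (2 ^ r * 2 ^ r) ^ ℓ) := by gcongr
      _ = 2 ^ (r * (4 * ℓ + 2)) := by ring
  calc ((2 ^ r : ℕ) : ℝ) ^ 2 * ∑ ξ : DyadicBlock r × DyadicBlock r → Bool with
        IntervalMinor (J ℓ ℓ) (blockMatrix ξ), bernoulliWeight q ξ
      ≤ ((2 ^ r : ℕ) : ℝ) ^ 2 * ∑ ξ : DyadicBlock r × DyadicBlock r → Bool with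
        ContainsBiclique ℓ ξ, bernoulliWeight q ξ := by
        refine mul_le_mul_of_nonneg_left (sum_le_sum_of_subset_of_nonneg
          (monotone_filter_right _ fun _ _ => containsBiclique_of_intervalMinor)
          fun ξ _ _ => bernoulliWeight_nonneg hq0 hq1' ξ) (by positivity)
    _ ≤ ((2 ^ r : ℕ) : ℝ) ^ 2 * ((Fintype.card (DyadicBlock r) ^ ℓ *
        Fintype.card (DyadicBlock r) ^ ℓ : ℕ) * (1 - q) ^ (ℓ ^ 2)) := by
        gcongr
        exact sum_bernoulliWeight_containsBiclique_le hq0 hq1' ℓ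
    _ ≤ (2 : ℝ) ^ (r * (4 * ℓ + 2)) * (1 - q) ^ (ℓ ^ 2) := by
        rw [← mul_assoc]
        refine mul_le_mul_of_nonneg_right (by exact_mod_cast hcard) (pow_nonneg (by linarith) _)
    _ ≤ 1 := two_pow_mul_one_sub_pow_le_one hq0 hq1 hrq

lemma sum_mul_mass_sub_le_sum_mul_mass_ite {m n : ℕ} {α : Type*} [Fintype α] {w : α → ℝ}
    (hw : ∀ a, 0 ≤ w a) (A : α → Fin m → Fin n → Bool) (bad : α → Prop) [DecidablePred bad] :
    ∑ a, w a * mass (A a) - (m * n : ℝ) * ∑ a with bad a, w a ≤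
      ∑ a, w a * mass (if bad a then fun _ _ => false else A a) := by
  rw [sum_filter, mul_sum, ← sum_sub_distrib]
  refine sum_le_sum fun a _ => ?_
  split_ifs
  · have : (mass (A a) : ℝ) ≤ m * n := by exact_mod_cast mass_le (A a)
    rw [mass_false]
    nlinarith [hw a]
  · simp

lemma not_intervalMinor_J_false {k l m n : ℕ} (hk : 0 < k) (hl : 0 < l) :
    ¬ IntervalMinor (J k l) (fun _ _ => false : Fin m → Fin n → Bool) := by
  rintro ⟨_, _, _, _, -, -, -, -, h⟩
  obtain ⟨_, _, -, -, -, -, h⟩ := h ⟨0, hk⟩ ⟨0, hl⟩ rfl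
  exact Bool.false_ne_true h

theorem stmt6_general (r ℓ : ℕ) (q : ℝ) (hl : 0 < ℓ) (hq0 : 0 < q) (hq1 : q < 1 / 2)
    (hrq : (r : ℝ) ≤ q * (ℓ : ℝ) / 4) :
    ∃ M : Fin (2 ^ r) → Fin (2 ^ r) → Bool,
      (1 - q) ^ ((r + 1) ^ 2) * ((2 ^ r : ℕ) : ℝ) ^ 2 - 1 ≤ (mass M : ℝ) ∧
      ¬ IntervalMinor (J ℓ ℓ) M := by
  classical
  let bad (ξ : DyadicBlock r × DyadicBlock r → Bool) : Prop := IntervalMinor (J ℓ ℓ) (blockMatrix ξ)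
  let altered (ξ : DyadicBlock r × DyadicBlock r → Bool) : Fin (2 ^ r) → Fin (2 ^ r) → Bool :=
    if bad ξ then fun _ _ => false else blockMatrix ξ
  have hmean : (1 - q) ^ ((r + 1) ^ 2) * ((2 ^ r : ℕ) : ℝ) ^ 2 - 1 ≤
      ∑ ξ, bernoulliWeight q ξ * mass (altered ξ) := by
    have hbad := sq_mul_sum_bernoulliWeight_intervalMinor_le_one hq0.le hq1 hrq
    have halter := sum_mul_mass_sub_le_sum_mul_mass_ite
      (bernoulliWeight_nonneg hq0.le (by linarith)) blockMatrix bad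
    rw [sum_bernoulliWeight_mul_mass_blockMatrix, ← sq] at halter
    linarith
  obtain ⟨ξ, hξ⟩ := exists_le_of_le_sum_bernoulliWeight_mul hq0 (by linarith) hmean
  refine ⟨altered ξ, hξ, ?_⟩
  by_cases h : bad ξ
  · simpa only [altered, if_pos h] using not_intervalMinor_J_false hl hl
  · simpa only [altered, if_neg h] using h

/-- Let `r, ℓ` be positive integers and `q` a real with
`0 < q < 1/2` and `3 ≤ r ≤ qℓ/4`, and let `N = 2^r`. Then there is an `N × N`
binary matrix `M` with mass at least `(1−q)^{(r+1)²}·N² − 1` that avoids `J_ℓ`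
as an interval minor. -/
theorem stmt6 (r ℓ : ℕ) (q : ℝ) (hl : 0 < ℓ) (hq0 : 0 < q) (hq1 : q < 1 / 2)
    (hr3 : 3 ≤ r) (hrq : (r : ℝ) ≤ q * (ℓ : ℝ) / 4) :
    ∃ M : Fin (2 ^ r) → Fin (2 ^ r) → Bool,
      (1 - q) ^ ((r + 1) ^ 2) * ((2 ^ r : ℕ) : ℝ) ^ 2 - 1 ≤ (mass M : ℝ) ∧
      ¬ IntervalMinor (J ℓ ℓ) M :=
  stmt6_general r ℓ q hl hq0 hq1 hrq
end

section
/- There is an absolute constant c > 0 such that for every integer k ≥ 2 there exist a k-permutation π, a positive integer N with N ≥ 2^{c·k^{1/12}}, and an N×N binary matrix M whose mass is at least (1 − k^{−1/4})·N² and which avoids π. -/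
open Filter

/-!
For `t = 2^30 m^6`, let `π` be the `k`-permutation (`k ≥ t²`) transposing the grid
`{b + t a : a, b < t}`. If a matrix contains `π` through rows `r` and columns `c`, then the row
intervals `[r(a,0), r(a,t-1)]` and the column intervals `[c(b,0), c(b,t-1)]` form two chains of `t`
disjoint intervals, and the matrix has the one `(r(a,b), c(b,a))` in every block of the two chains.
So the complement of a set `Z ⊆ [2^m]²` containing a full block of every pair of chains avoids `π`.

Such a `Z` is found at random. Every interval lies in a dyadic window `[u 2^κ, u 2^κ + 2^(κ+1))`
with `2^κ` less than twice its length, so at most three intervals of a chain share a window.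
Let `Z` be the union of the boxes `W × W'` over a random set of pairs of windows, each pair
taken with probability `1/q`. A pair of chains meets at least `t²/9` pairs of windows, so it is
missed with probability at most `(1 - 1/q)^(t²/9)`, which beats the `2^(4tm)` pairs of chains, while the
expected area of `Z` is `O(m² 4^m / q)`. With `q = 2^23 m^5` the complement has density
`1 - (64 m)^(-3)` at `N = 2^m`, and `k` is within a constant factor of `m^12`.
For `k < 2^60` a `2 × 2` matrix already suffices.
-/

open Finset

namespace PatternAvoidance

section RandomFunctions

variable {ι β : Type*} [Fintype ι] [DecidableEq ι] [Fintype β] [DecidableEq β]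

lemma card_filter_forall_mem (S : Finset ι) (A : Finset β) :
    #{F : ι → β | ∀ p ∈ S, F p ∈ A} = #A ^ #S * Fintype.card β ^ (Fintype.card ι - #S) := by
  have hpi : ({F : ι → β | ∀ p ∈ S, F p ∈ A} : Finset _) =
      Fintype.piFinset fun p => if p ∈ S then A else univ := by
    ext F
    simp only [mem_filter, mem_univ, true_and, Fintype.mem_piFinset]
    refine ⟨fun h p => ?_, fun h p hp => by simpa [hp] using h p⟩
    split_ifs with hp
    · exact h p hp
    · exact mem_univ _
  rw [hpi, Fintype.card_piFinset]
  simp only [apply_ite card, card_univ, prod_ite, prod_const, filter_mem_eq_inter, univ_inter,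
    filter_not, card_univ_sdiff]

lemma two_mul_pred_pow_le_pow {q : ℕ} (hq : 1 ≤ q) : 2 * (q - 1) ^ q ≤ q ^ q := by
  have bernoulli := pow_add_mul_le_add_pow (a := q - 1) (b := 1) (Nat.zero_le _) (by omega) q
  rw [Nat.sub_add_cancel hq, mul_one, Nat.cast_id] at bernoulli
  have hshift : (q - 1) ^ q ≤ q * (q - 1) ^ (q - 1) := by
    calc (q - 1) ^ q = (q - 1) * (q - 1) ^ (q - 1) := by
          rw [← pow_succ', Nat.sub_add_cancel hq]
      _ ≤ q * (q - 1) ^ (q - 1) := Nat.mul_le_mul_right _ (Nat.sub_le q 1)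
  omega

lemma two_pow_mul_pred_pow_le {q M n : ℕ} (hq : 1 ≤ q) (h : q * M ≤ n) :
    2 ^ M * (q - 1) ^ n ≤ q ^ n := by
  obtain ⟨r, rfl⟩ := Nat.exists_eq_add_of_le h
  calc 2 ^ M * (q - 1) ^ (q * M + r) = (2 * (q - 1) ^ q) ^ M * (q - 1) ^ r := by
        rw [pow_add, mul_pow, pow_mul, mul_assoc]
    _ ≤ (q ^ q) ^ M * q ^ r := by
        gcongr
        · exact two_mul_pred_pow_le_pow hq
        · exact Nat.sub_le q 1
    _ = q ^ (q * M + r) := by rw [pow_add, pow_mul]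

lemma card_mul_card_filter_apply_eq (p : ι) (v : β) :
    Fintype.card β * #{F : ι → β | F p = v} = Fintype.card β ^ Fintype.card ι := by
  have h := card_filter_forall_mem {p} {v}
  simp only [mem_singleton, forall_eq, card_singleton, one_pow, one_mul] at h
  rw [h, ← pow_succ', Nat.sub_add_cancel (Fintype.card_pos_iff.2 ⟨p⟩)]

variable {q : ℕ} [NeZero q]

lemma two_pow_mul_card_filter_forall_ne_le {S : Finset ι} {M : ℕ} (hS : q * M ≤ #S) :
    2 ^ M * #{F : ι → Fin q | ∀ p ∈ S, F p ≠ 0} ≤ q ^ Fintype.card ι := by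
  have hcount := card_filter_forall_mem S (univ.erase (0 : Fin q))
  simp only [mem_erase, mem_univ, and_true, card_erase_of_mem, card_univ, Fintype.card_fin]
    at hcount
  have hSle : #S ≤ Fintype.card ι := card_le_univ S
  calc 2 ^ M * #{F : ι → Fin q | ∀ p ∈ S, F p ≠ 0}
      = 2 ^ M * (q - 1) ^ #S * q ^ (Fintype.card ι - #S) := by rw [hcount, mul_assoc]
    _ ≤ q ^ #S * q ^ (Fintype.card ι - #S) := by
        gcongr; exact two_pow_mul_pred_pow_le NeZero.one_le hS
    _ = q ^ Fintype.card ι := by rw [← pow_add, Nat.add_sub_cancel' hSle]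

lemma mul_sum_sum_filter_eq_zero (w : ι → ℕ) :
    q * ∑ F : ι → Fin q, ∑ p ∈ {p | F p = 0}, w p = q ^ Fintype.card ι * ∑ p, w p := by
  simp_rw [sum_filter]
  rw [sum_comm, mul_sum, mul_sum]
  refine sum_congr rfl fun p _ => ?_
  have hcount := card_mul_card_filter_apply_eq p (0 : Fin q)
  rw [Fintype.card_fin] at hcount
  rw [← sum_filter, sum_const, smul_eq_mul, ← mul_assoc, hcount]

lemma two_mul_card_filter_lt_le (w : ι → ℕ) :
    2 * #{F : ι → Fin q | 2 * ∑ p, w p < q * ∑ p ∈ {p | F p = 0}, w p} ≤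
      q ^ Fintype.card ι := by
  set W := ∑ p, w p
  set heavy := ({F : ι → Fin q | 2 * W < q * ∑ p ∈ {p | F p = 0}, w p} : Finset _)
  have markov : #heavy * (2 * W + 1) ≤ q ^ Fintype.card ι * W := by
    calc #heavy * (2 * W + 1) ≤ ∑ F ∈ heavy, q * ∑ p ∈ {p | F p = 0}, w p := by
          rw [← smul_eq_mul, ← sum_const]
          exact sum_le_sum fun F hF => (mem_filter.1 hF).2
      _ ≤ ∑ F : ι → Fin q, q * ∑ p ∈ {p | F p = 0}, w p := sum_le_sum_of_subset (subset_univ _)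
      _ = q ^ Fintype.card ι * W := by rw [← mul_sum, mul_sum_sum_filter_eq_zero]
  by_contra! h
  have h' : (q ^ Fintype.card ι + 1) * W ≤ 2 * #heavy * W := Nat.mul_le_mul_right W h
  ring_nf at markov h'
  omega

/-- The zero set `R` of a uniformly random `F : ι → Fin q` misses a given `S ∈ 𝒮` with
probability `(1 - 1/q) ^ #S ≤ 2 ^ (-M)`, and its expected weight is `(∑ p, w p) / q`. -/
theorem exists_forall_exists_mem_and_mul_sum_le (w : ι → ℕ)
    (𝒮 : Finset (Finset ι)) {M : ℕ} (h𝒮 : 4 * #𝒮 ≤ 2 ^ M) (hS : ∀ S ∈ 𝒮, q * M ≤ #S) :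
    ∃ R : Finset ι, (∀ S ∈ 𝒮, ∃ p ∈ S, p ∈ R) ∧ q * ∑ p ∈ R, w p ≤ 2 * ∑ p, w p := by
  set missing := 𝒮.biUnion fun S => ({F : ι → Fin q | ∀ p ∈ S, F p ≠ 0} : Finset _)
  set heavy :=
    ({F : ι → Fin q | 2 * ∑ p, w p < q * ∑ p ∈ {p | F p = 0}, w p} : Finset _)
  have hmissing : 4 * #missing ≤ q ^ Fintype.card ι := by
    have union_bound : 2 ^ M * #missing ≤ #𝒮 * q ^ Fintype.card ι := by
      calc 2 ^ M * #missing
          ≤ ∑ S ∈ 𝒮, 2 ^ M * #{F : ι → Fin q | ∀ p ∈ S, F p ≠ 0} := by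
            rw [← mul_sum]; exact Nat.mul_le_mul_left _ card_biUnion_le
        _ ≤ #𝒮 * q ^ Fintype.card ι := by
            rw [← smul_eq_mul, ← sum_const]
            exact sum_le_sum fun S hS' => two_pow_mul_card_filter_forall_ne_le (hS S hS')
    refine Nat.le_of_mul_le_mul_left ?_ (Nat.two_pow_pos M)
    calc 2 ^ M * (4 * #missing) = 4 * (2 ^ M * #missing) := by ring
      _ ≤ 4 * #𝒮 * q ^ Fintype.card ι := by rw [mul_assoc]; gcongr
      _ ≤ 2 ^ M * q ^ Fintype.card ι := by gcongr
  have hheavy : 2 * #heavy ≤ q ^ Fintype.card ι := two_mul_card_filter_lt_le w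
  obtain ⟨F, hF⟩ : ∃ F : ι → Fin q, F ∉ missing ∪ heavy := by
    by_contra! hall
    have hcover := card_le_card fun F (_ : F ∈ univ) => hall F
    rw [card_univ, Fintype.card_fun, Fintype.card_fin] at hcover
    have hunion := card_union_le missing heavy
    have hpos := Nat.pos_of_neZero (q ^ Fintype.card ι)
    omega
  rw [mem_union, not_or] at hF
  refine ⟨univ.filter (F · = 0), fun S hS' => ?_, ?_⟩
  · have hFmissing := hF.1
    simp only [missing, mem_biUnion, mem_filter, mem_univ, true_and, not_exists, not_and,
      not_forall, not_not] at hFmissing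
    obtain ⟨p, hp, hp0⟩ := hFmissing S hS'
    exact ⟨p, hp, mem_filter.2 ⟨mem_univ _, hp0⟩⟩
  · simpa [heavy] using hF.2

end RandomFunctions

structure IsIntervalChain {ι α : Type*} [Preorder ι] [Preorder α] (lo hi : ι → α) : Prop where
  le : ∀ a, lo a ≤ hi a
  lt : ∀ a b, a < b → hi a < lo b

section Chains

variable {ι α : Type*} [LinearOrder ι] [Preorder α] [LocallyFiniteOrder α] {lo hi : ι → α}

lemma IsIntervalChain.pairwiseDisjoint_Icc (h : IsIntervalChain lo hi) (s : Set ι) :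
    s.PairwiseDisjoint fun a => Icc (lo a) (hi a) := by
  have key : ∀ a b, a < b → Disjoint (Icc (lo a) (hi a)) (Icc (lo b) (hi b)) := fun a b hab =>
    disjoint_left.2 fun x hxa hxb =>
      (lt_irrefl x) (((mem_Icc.1 hxa).2.trans_lt (h.lt a b hab)).trans_le (mem_Icc.1 hxb).1)
  intro a _ b _ hab
  rcases hab.lt_or_gt with hab | hab
  · exact key a b hab
  · exact (key b a hab).symm

lemma IsIntervalChain.sum_card_Icc_le [DecidableEq α] (h : IsIntervalChain lo hi)
    {s : Finset ι} {T : Finset α} (hT : ∀ a ∈ s, Icc (lo a) (hi a) ⊆ T) :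
    ∑ a ∈ s, #(Icc (lo a) (hi a)) ≤ #T := by
  rw [← card_biUnion (h.pairwiseDisjoint_Icc _)]
  exact card_le_card (biUnion_subset.2 hT)

end Chains

lemma two_pow_size_le (n : ℕ) : 2 ^ n.size ≤ 2 * n + 1 := by
  rcases Nat.eq_zero_or_pos n.size with h | h
  · simp [h]
  · have hhalf : 2 ^ (n.size - 1) ≤ n := Nat.lt_size.1 (by omega)
    have hdouble : 2 ^ n.size = 2 * 2 ^ (n.size - 1) := by
      rw [← pow_succ']; congr 1; omega
    omega

section DyadicWindows

variable {m : ℕ}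

-- Consecutive windows of one scale overlap by half, so each interval of length at most `2 ^ κ`
-- lies in a window of scale `κ`.
def dyadicWindow (w : Fin (m + 1) × Fin (2 ^ m)) : Finset (Fin (2 ^ m)) :=
  {x | (w.2 : ℕ) * 2 ^ (w.1 : ℕ) ≤ x ∧ (x : ℕ) < (w.2 : ℕ) * 2 ^ (w.1 : ℕ) + 2 ^ (w.1 + 1 : ℕ)}

lemma card_dyadicWindow_le (w : Fin (m + 1) × Fin (2 ^ m)) :
    #(dyadicWindow w) ≤ 2 ^ (w.1 + 1 : ℕ) := by
  calc #(dyadicWindow w)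
      ≤ #(Ico ((w.2 : ℕ) * 2 ^ (w.1 : ℕ)) ((w.2 : ℕ) * 2 ^ (w.1 : ℕ) + 2 ^ (w.1 + 1 : ℕ))) :=
        card_le_card_of_injOn Fin.val
          (fun x hx => by simpa [dyadicWindow] using hx) fun _ _ _ _ => Fin.ext
    _ = 2 ^ (w.1 + 1 : ℕ) := by simp

lemma sum_card_dyadicWindow_le (m : ℕ) :
    ∑ w : Fin (m + 1) × Fin (2 ^ m), #(dyadicWindow w) ≤ (m + 1) * (2 * 2 ^ m) := by
  rw [Fintype.sum_prod_type]
  calc ∑ κ : Fin (m + 1), ∑ u : Fin (2 ^ m), #(dyadicWindow (κ, u))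
      ≤ ∑ _κ : Fin (m + 1), 2 * 2 ^ m := sum_le_sum fun κ _ => ?_
    _ = (m + 1) * (2 * 2 ^ m) := by simp
  have hfiber (x : Fin (2 ^ m)) : #{u : Fin (2 ^ m) | x ∈ dyadicWindow (κ, u)} ≤ 2 := by
    have hpos : 0 < 2 ^ (κ : ℕ) := Nat.two_pow_pos _
    calc #{u : Fin (2 ^ m) | x ∈ dyadicWindow (κ, u)}
        ≤ #(Icc ((x : ℕ) / 2 ^ (κ : ℕ) - 1) ((x : ℕ) / 2 ^ (κ : ℕ))) := by
          refine card_le_card_of_injOn Fin.val (fun u hu => ?_) fun _ _ _ _ => Fin.ext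
          simp only [dyadicWindow, coe_filter, mem_filter, mem_univ, true_and,
            Set.mem_ofPred_eq] at hu
          have h1 : (u : ℕ) ≤ (x : ℕ) / 2 ^ (κ : ℕ) := (Nat.le_div_iff_mul_le hpos).2 hu.1
          have h2 : (x : ℕ) / 2 ^ (κ : ℕ) < u + 2 := by
            rw [Nat.div_lt_iff_lt_mul hpos]
            calc (x : ℕ) < u * 2 ^ (κ : ℕ) + 2 ^ (κ + 1 : ℕ) := hu.2
              _ = (u + 2) * 2 ^ (κ : ℕ) := by ring
          simp only [coe_Icc, Set.mem_Icc]
          omega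
      _ ≤ 2 := by rw [Nat.card_Icc]; omega
  calc ∑ u : Fin (2 ^ m), #(dyadicWindow (κ, u))
      = ∑ x : Fin (2 ^ m), #{u : Fin (2 ^ m) | x ∈ dyadicWindow (κ, u)} := by
        convert sum_card_bipartiteAbove_eq_sum_card_bipartiteBelow
          (r := fun u x => x ∈ dyadicWindow (κ, u)) (s := univ) (t := univ) using 2
        · simp [bipartiteAbove]
        · rfl
    _ ≤ ∑ _x : Fin (2 ^ m), 2 := sum_le_sum fun x _ => hfiber x
    _ = 2 * 2 ^ m := by simp [mul_comm]

def windowIndex (lo hi : Fin (2 ^ m)) : Fin (m + 1) × Fin (2 ^ m) :=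
  (⟨((hi : ℕ) - lo).size, Nat.lt_succ_of_le (Nat.size_le.2 ((Nat.sub_le _ _).trans_lt hi.isLt))⟩,
    ⟨(lo : ℕ) / 2 ^ ((hi : ℕ) - lo).size, (Nat.div_le_self _ _).trans_lt lo.isLt⟩)

lemma Icc_subset_dyadicWindow_windowIndex (lo hi : Fin (2 ^ m)) :
    Icc lo hi ⊆ dyadicWindow (windowIndex lo hi) := by
  intro x hx
  simp only [mem_Icc, Fin.le_def] at hx
  rw [dyadicWindow, mem_filter]
  refine ⟨mem_univ x, ?_⟩
  simp only [windowIndex]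
  set κ := ((hi : ℕ) - lo).size
  have hdiv := Nat.mod_add_div' (lo : ℕ) (2 ^ κ)
  have hmod := Nat.mod_lt (lo : ℕ) (Nat.two_pow_pos κ)
  have hlen : (hi : ℕ) - lo < 2 ^ κ := Nat.lt_size_self _
  have hpow : 2 ^ (κ + 1) = 2 ^ κ * 2 := pow_succ 2 κ
  omega

variable {ι : Type*} [Fintype ι] [LinearOrder ι] {lo hi : ι → Fin (2 ^ m)}

lemma IsIntervalChain.card_filter_windowIndex_eq_le (h : IsIntervalChain lo hi)
    (w : Fin (m + 1) × Fin (2 ^ m)) : #{a | windowIndex (lo a) (hi a) = w} ≤ 3 := by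
  set fiber := ({a | windowIndex (lo a) (hi a) = w} : Finset ι)
  have hlong : ∀ a ∈ fiber, 2 ^ (w.1 : ℕ) + 1 ≤ 2 * #(Icc (lo a) (hi a)) := by
    intro a ha
    have hw : (w.1 : ℕ) = ((hi a : ℕ) - lo a).size := by rw [← (mem_filter.1 ha).2]; rfl
    have hsize := two_pow_size_le ((hi a : ℕ) - lo a)
    have hle := Fin.le_def.1 (h.le a)
    rw [Fin.card_Icc, hw]
    omega
  have hpack : ∑ a ∈ fiber, #(Icc (lo a) (hi a)) ≤ 2 ^ (w.1 + 1 : ℕ) :=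
    (h.sum_card_Icc_le fun a ha => (mem_filter.1 ha).2 ▸
      Icc_subset_dyadicWindow_windowIndex _ _).trans (card_dyadicWindow_le w)
  have hcount : #fiber * (2 ^ (w.1 : ℕ) + 1) ≤ 4 * 2 ^ (w.1 : ℕ) := by
    calc #fiber * (2 ^ (w.1 : ℕ) + 1) ≤ ∑ a ∈ fiber, 2 * #(Icc (lo a) (hi a)) := by
          rw [← smul_eq_mul, ← sum_const]; exact sum_le_sum hlong
      _ ≤ 4 * 2 ^ (w.1 : ℕ) := by rw [← mul_sum, pow_succ] at *; omega
  by_contra! hbig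
  have hbig' : 4 * 2 ^ (w.1 : ℕ) ≤ #fiber * 2 ^ (w.1 : ℕ) := Nat.mul_le_mul_right _ hbig
  rw [mul_add_one] at hcount
  omega

lemma IsIntervalChain.card_le_three_mul_card_image_windowIndex (h : IsIntervalChain lo hi) :
    Fintype.card ι ≤ 3 * #(univ.image fun a => windowIndex (lo a) (hi a)) :=
  card_le_mul_card_image _ 3 fun w _ => h.card_filter_windowIndex_eq_le w

end DyadicWindows

def ContainsChainBlock (t : ℕ) {N : ℕ} (Z : Finset (Fin N × Fin N)) : Prop :=
  ∀ lo hi lo' hi' : Fin t → Fin N, IsIntervalChain lo hi → IsIntervalChain lo' hi' →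
    ∃ a b, Icc (lo a) (hi a) ×ˢ Icc (lo' b) (hi' b) ⊆ Z

lemma containsChainBlock_biUnion {m t : ℕ}
    {R : Finset ((Fin (m + 1) × Fin (2 ^ m)) × (Fin (m + 1) × Fin (2 ^ m)))}
    (hR : ∀ lo hi lo' hi' : Fin t → Fin (2 ^ m), IsIntervalChain lo hi → IsIntervalChain lo' hi' →
      ∃ a b, (windowIndex (lo a) (hi a), windowIndex (lo' b) (hi' b)) ∈ R) :
    ContainsChainBlock t (R.biUnion fun p => dyadicWindow p.1 ×ˢ dyadicWindow p.2) := by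
  intro lo hi lo' hi' hc hc'
  obtain ⟨a, b, hab⟩ := hR lo hi lo' hi' hc hc'
  refine ⟨a, b, fun x hx => mem_biUnion.2 ⟨_, hab, ?_⟩⟩
  obtain ⟨hx1, hx2⟩ := mem_product.1 hx
  exact mem_product.2 ⟨Icc_subset_dyadicWindow_windowIndex _ _ hx1,
    Icc_subset_dyadicWindow_windowIndex _ _ hx2⟩

lemma sum_card_dyadicWindow_mul_card_le (m : ℕ) :
    ∑ p : (Fin (m + 1) × Fin (2 ^ m)) × (Fin (m + 1) × Fin (2 ^ m)),
      #(dyadicWindow p.1) * #(dyadicWindow p.2) ≤ 4 * (m + 1) ^ 2 * (2 ^ m) ^ 2 :=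
  calc _ = (∑ w : Fin (m + 1) × Fin (2 ^ m), #(dyadicWindow w)) ^ 2 := by
          rw [sq, sum_mul_sum, ← Fintype.sum_prod_type']
    _ ≤ ((m + 1) * (2 * 2 ^ m)) ^ 2 := by gcongr; exact sum_card_dyadicWindow_le m
    _ = 4 * (m + 1) ^ 2 * (2 ^ m) ^ 2 := by ring

theorem exists_containsChainBlock (m t q : ℕ) [NeZero q]
    (h : 9 * (q * (4 * t * m + 2)) ≤ t ^ 2) :
    ∃ Z : Finset (Fin (2 ^ m) × Fin (2 ^ m)),
      ContainsChainBlock t Z ∧ q * #Z ≤ 8 * (m + 1) ^ 2 * (2 ^ m) ^ 2 := by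
  classical
  let chains : Finset ((Fin t → Fin (2 ^ m)) × (Fin t → Fin (2 ^ m))) :=
    {c | IsIntervalChain c.1 c.2}
  let windows (c : (Fin t → Fin (2 ^ m)) × (Fin t → Fin (2 ^ m))) :=
    univ.image fun a => windowIndex (c.1 a) (c.2 a)
  let 𝒮 := (chains ×ˢ chains).image fun cc => windows cc.1 ×ˢ windows cc.2
  have h𝒮 : 4 * #𝒮 ≤ 2 ^ (4 * t * m + 2) := by
    have hchains : #chains ≤ (2 ^ m) ^ t * (2 ^ m) ^ t := by
      simpa using card_le_univ chains
    calc 4 * #𝒮 ≤ 4 * (#chains * #chains) := by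
          rw [← card_product]; gcongr; exact card_image_le
      _ ≤ 4 * (((2 ^ m) ^ t * (2 ^ m) ^ t) * ((2 ^ m) ^ t * (2 ^ m) ^ t)) := by gcongr
      _ = 2 ^ (4 * t * m + 2) := by rw [← pow_mul, ← pow_add, ← pow_add, pow_add]; ring_nf
  have hS : ∀ S ∈ 𝒮, q * (4 * t * m + 2) ≤ #S := by
    simp only [𝒮, mem_image, mem_product]
    rintro _ ⟨⟨c, c'⟩, ⟨hc, hc'⟩, rfl⟩
    have hw := (mem_filter.1 hc).2.card_le_three_mul_card_image_windowIndex
    have hw' := (mem_filter.1 hc').2.card_le_three_mul_card_image_windowIndex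
    rw [Fintype.card_fin] at hw hw'
    rw [card_product]
    nlinarith
  let area (p : (Fin (m + 1) × Fin (2 ^ m)) × (Fin (m + 1) × Fin (2 ^ m))) :=
    #(dyadicWindow p.1) * #(dyadicWindow p.2)
  obtain ⟨R, hR, hRarea⟩ := exists_forall_exists_mem_and_mul_sum_le area 𝒮 h𝒮 hS
  refine ⟨R.biUnion fun p => dyadicWindow p.1 ×ˢ dyadicWindow p.2,
    containsChainBlock_biUnion fun lo hi lo' hi' hc hc' => ?_, ?_⟩
  · have hcc : ((lo, hi), (lo', hi')) ∈ chains ×ˢ chains :=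
      mem_product.2 ⟨mem_filter.2 ⟨mem_univ _, hc⟩, mem_filter.2 ⟨mem_univ _, hc'⟩⟩
    obtain ⟨p, hpS, hpR⟩ := hR _ (mem_image_of_mem _ hcc)
    obtain ⟨⟨a, -, ha⟩, ⟨b, -, hb⟩⟩ := And.imp mem_image.1 mem_image.1 (mem_product.1 hpS)
    exact ⟨a, b, by rw [ha, hb]; exact hpR⟩
  · calc q * #(R.biUnion fun p => dyadicWindow p.1 ×ˢ dyadicWindow p.2)
        ≤ q * ∑ p ∈ R, area p :=
          Nat.mul_le_mul_left q
            (card_biUnion_le.trans_eq (sum_congr rfl fun p _ => card_product _ _))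
      _ ≤ 2 * ∑ p, area p := hRarea
      _ ≤ 2 * (4 * (m + 1) ^ 2 * (2 ^ m) ^ 2) := by
          gcongr; exact sum_card_dyadicWindow_mul_card_le m
      _ = 8 * (m + 1) ^ 2 * (2 ^ m) ^ 2 := by ring

section GridTranspose

variable {t k : ℕ} (h : t * t ≤ k)

def gridCell (a b : Fin t) : Fin k := Fin.castLE h (finProdFinEquiv (a, b))

lemma val_gridCell (a b : Fin t) : (gridCell h a b : ℕ) = b + t * a := rfl

lemma gridCell_strictMono (a : Fin t) : StrictMono (gridCell h a) := fun b b' hbb' => by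
  rw [Fin.lt_def, val_gridCell, val_gridCell]
  exact Nat.add_lt_add_right hbb' _

lemma gridCell_lt_gridCell {a a' : Fin t} (haa' : a < a') (b b' : Fin t) :
    gridCell h a b < gridCell h a' b' := by
  rw [Fin.lt_def, val_gridCell, val_gridCell]
  have hrow : t * (a + 1) ≤ t * a' := Nat.mul_le_mul_left t haa'
  rw [mul_add_one] at hrow
  omega

noncomputable def gridTranspose : Equiv.Perm (Fin k) :=
  Equiv.Perm.viaFintypeEmbedding
    (finProdFinEquiv.symm.trans ((Equiv.prodComm (Fin t) (Fin t)).trans finProdFinEquiv))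
    (Fin.castLEEmb h)

lemma gridTranspose_gridCell (a b : Fin t) : gridTranspose h (gridCell h a b) = gridCell h b a := by
  rw [gridTranspose, gridCell, ← Fin.coe_castLEEmb, Equiv.Perm.viaFintypeEmbedding_apply_image]
  simp [gridCell]

end GridTranspose

lemma avoidsPerm_gridTranspose {t k N : ℕ} [NeZero t] (h : t * t ≤ k)
    {Z : Finset (Fin N × Fin N)} (hZ : ContainsChainBlock t Z) :
    AvoidsPerm (fun i j => decide ((i, j) ∉ Z)) (gridTranspose h) := by
  rintro ⟨r, c, hr, hc, hone⟩
  have mem_Icc_cell {f : Fin k → Fin N} (hf : StrictMono f) (a b : Fin t) :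
      f (gridCell h a b) ∈ Icc (f (gridCell h a ⊥)) (f (gridCell h a ⊤)) :=
    mem_Icc.2 ⟨hf.monotone ((gridCell_strictMono h a).monotone bot_le),
      hf.monotone ((gridCell_strictMono h a).monotone le_top)⟩
  have rows_chain {f : Fin k → Fin N} (hf : StrictMono f) :
      IsIntervalChain (fun a => f (gridCell h a ⊥)) (fun a => f (gridCell h a ⊤)) :=
    ⟨fun a => mem_Icc.1 (mem_Icc_cell hf a ⊥) |>.2,
      fun a a' haa' => hf (gridCell_lt_gridCell h haa' _ _)⟩
  obtain ⟨a, b, hab⟩ := hZ _ _ _ _ (rows_chain hr) (rows_chain hc)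
  have hone_ab := hone (gridCell h a b) (gridCell h b a)
    (by simp [permMatrix, gridTranspose_gridCell])
  simp only [decide_eq_true_eq] at hone_ab
  exact hone_ab (hab (mem_product.2 ⟨mem_Icc_cell hr a b, mem_Icc_cell hc b a⟩))

lemma mass_add_card_eq {N : ℕ} (Z : Finset (Fin N × Fin N)) :
    mass (fun i j => decide ((i, j) ∉ Z)) + #Z = N * N := by
  have hcompl : ({p : Fin N × Fin N | decide ((p.1, p.2) ∉ Z) = true} : Finset _) = Zᶜ := by
    ext; simp
  rw [mass, hcompl, card_compl_add_card, Fintype.card_prod, Fintype.card_fin]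

theorem exists_avoidsPerm_one_sub_inv_mul_le_mass {k m : ℕ} (hm : 1 ≤ m)
    (hk : (2 ^ 30 * m ^ 6) ^ 2 ≤ k) :
    ∃ (π : Equiv.Perm (Fin k)) (M : Fin (2 ^ m) → Fin (2 ^ m) → Bool),
      (1 - ((64 * m : ℝ) ^ 3)⁻¹) * (2 ^ m : ℝ) ^ 2 ≤ mass M ∧ AvoidsPerm M π := by
  set t := 2 ^ 30 * m ^ 6
  set q := 2 ^ 23 * m ^ 5
  have : NeZero t := ⟨by positivity⟩
  have : NeZero q := ⟨by positivity⟩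
  -- `t` and `q` are chosen so that `9 q (4 t m + 2) ≤ t ^ 2` and `8 (m + 1) ^ 2 (64 m) ^ 3 ≤ q`.
  have hparam : 9 * (q * (4 * t * m + 2)) ≤ t ^ 2 := by
    have hpow : m ^ 5 ≤ m ^ 12 := Nat.pow_le_pow_right hm (by norm_num)
    simp only [q, t]
    ring_nf
    omega
  obtain ⟨Z, hZ, hZcard⟩ := exists_containsChainBlock m t q hparam
  refine ⟨gridTranspose (sq t ▸ hk), _, ?_, avoidsPerm_gridTranspose _ hZ⟩
  have hZsmall : (64 * m) ^ 3 * #Z ≤ (2 ^ m) ^ 2 := by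
    refine Nat.le_of_mul_le_mul_left ?_ (show 0 < 32 * m ^ 2 by positivity)
    calc 32 * m ^ 2 * ((64 * m) ^ 3 * #Z) = q * #Z := by ring
      _ ≤ 8 * (m + 1) ^ 2 * (2 ^ m) ^ 2 := hZcard
      _ ≤ 8 * (2 * m) ^ 2 * (2 ^ m) ^ 2 := by gcongr; omega
      _ = 32 * m ^ 2 * (2 ^ m) ^ 2 := by ring
  have hmass : (mass (fun i j => decide ((i, j) ∉ Z)) : ℝ) = (2 ^ m : ℝ) ^ 2 - #Z := by
    rw [eq_sub_iff_add_eq, sq]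
    exact_mod_cast mass_add_card_eq Z
  have hpos : (0 : ℝ) < (64 * m : ℝ) ^ 3 := by positivity
  have hZreal : (#Z : ℝ) ≤ ((64 * m : ℝ) ^ 3)⁻¹ * (2 ^ m : ℝ) ^ 2 := by
    rw [inv_mul_eq_div, le_div_iff₀ hpos, mul_comm]
    exact_mod_cast hZsmall
  rw [hmass]
  linarith

lemma avoidsPerm_of_lt {k m n : ℕ} (A : Fin m → Fin n → Bool) (π : Equiv.Perm (Fin k))
    (h : m < k) : AvoidsPerm A π := by
  rintro ⟨r, -, hr, -, -⟩
  have hcard := Fintype.card_le_of_injective r hr.injective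
  simp only [Fintype.card_fin] at hcard
  omega

lemma avoidsPerm_antidiagonal :
    AvoidsPerm (fun i j : Fin 2 => decide (i ≠ j)) (Equiv.refl (Fin 2)) := by
  rintro ⟨r, c, hr, hc, hone⟩
  have hr0 : r 0 = 0 := by have := hr (show (0 : Fin 2) < 1 by decide); omega
  have hc0 : c 0 = 0 := by have := hc (show (0 : Fin 2) < 1 by decide); omega
  simpa [permMatrix, hr0, hc0] using hone 0 0

lemma rpow_one_div_le_of_le_pow {x y : ℝ} (hx : 0 ≤ x) (hy : 0 ≤ y) {n : ℕ} (hn : n ≠ 0)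
    (h : x ≤ y ^ n) : x ^ ((1 : ℝ) / n) ≤ y :=
  calc x ^ ((1 : ℝ) / n) ≤ (y ^ n) ^ ((1 : ℝ) / n) := Real.rpow_le_rpow hx h (by positivity)
    _ = y := by rw [one_div, Real.pow_rpow_inv_natCast hy hn]

lemma inv_le_rpow_neg_one_div_of_le_pow {x y : ℝ} (hx : 0 < x) (hy : 0 ≤ y) {n : ℕ}
    (hn : n ≠ 0) (h : x ≤ y ^ n) : y⁻¹ ≤ x ^ (-(1 : ℝ) / n) := by
  rw [neg_div, Real.rpow_neg hx.le]
  exact inv_anti₀ (Real.rpow_pos_of_pos hx _) (rpow_one_div_le_of_le_pow hx.le hy hn h)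

lemma two_rpow_le_two_rpow_of_le_pow {x y : ℝ} (hx : 0 ≤ x) (hy : 0 ≤ y)
    (h : x ≤ (64 * y) ^ 12) : (2 : ℝ) ^ (1 / 64 * x ^ ((1 : ℝ) / 12)) ≤ 2 ^ y := by
  have hroot := rpow_one_div_le_of_le_pow hx (by positivity) (n := 12) (by norm_num) h
  rw [Nat.cast_ofNat] at hroot
  exact Real.rpow_le_rpow_of_exponent_le one_le_two (by linarith)

lemma exists_avoidsPerm_two {k : ℕ} (hk : 2 ≤ k) :
    ∃ (π : Equiv.Perm (Fin k)) (M : Fin 2 → Fin 2 → Bool),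
      (1 - (k : ℝ) ^ (-(1 : ℝ) / 4)) * 2 ^ 2 ≤ mass M ∧ AvoidsPerm M π := by
  rcases hk.eq_or_lt with rfl | hk3
  · refine ⟨Equiv.refl _, _, ?_, avoidsPerm_antidiagonal⟩
    have hinv := inv_le_rpow_neg_one_div_of_le_pow (x := 2) (y := 2) (n := 4)
      (by norm_num) (by norm_num) (by norm_num) (by norm_num)
    rw [show mass (fun i j : Fin 2 => decide (i ≠ j)) = 2 by decide]
    push_cast at hinv ⊢
    linarith
  · refine ⟨Equiv.refl _, fun _ _ => true, ?_, avoidsPerm_of_lt _ _ hk3⟩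
    rw [show mass (fun _ _ : Fin 2 => true) = 4 by decide]
    have hnonneg := Real.rpow_nonneg (Nat.cast_nonneg k) (-(1 : ℝ) / 4)
    push_cast
    linarith

lemma exists_le_and_le_pow_twelve {k : ℕ} (hk : 2 ^ 60 ≤ k) :
    ∃ m, 1 ≤ m ∧ (2 ^ 30 * m ^ 6) ^ 2 ≤ k ∧ k ≤ (64 * m) ^ 12 := by
  set L := Nat.log 2 k
  have hL : 60 ≤ L := Nat.le_log_of_pow_le one_lt_two hk
  refine ⟨2 ^ ((L - 60) / 12), Nat.one_le_two_pow, ?_, ?_⟩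
  · calc (2 ^ 30 * (2 ^ ((L - 60) / 12)) ^ 6) ^ 2 = 2 ^ (60 + 12 * ((L - 60) / 12)) := by ring
      _ ≤ 2 ^ L := Nat.pow_le_pow_right (by norm_num) (by omega)
      _ ≤ k := Nat.pow_log_le_self 2 (by positivity)
  · calc k ≤ 2 ^ (L + 1) := (Nat.lt_pow_succ_log_self one_lt_two k).le
      _ ≤ 2 ^ (72 + 12 * ((L - 60) / 12)) := Nat.pow_le_pow_right (by norm_num) (by omega)
      _ = (64 * 2 ^ ((L - 60) / 12)) ^ 12 := by ring

end PatternAvoidance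

open PatternAvoidance in
/-- There is an absolute constant `c > 0` such that for every
integer `k ≥ 2` there exist a `k`-permutation `π`, a positive integer `N` with
`N ≥ 2^{c·k^{1/12}}`, and an `N × N` binary matrix `M` whose mass is at least
`(1 − k^{−1/4})·N²` and which avoids `π`. -/
theorem stmt10 :
    ∃ c : ℝ, 0 < c ∧ ∀ k : ℕ, 2 ≤ k →
      ∃ (π : Equiv.Perm (Fin k)) (N : ℕ), 0 < N ∧
        (2 : ℝ) ^ (c * (k : ℝ) ^ ((1 : ℝ) / 12)) ≤ (N : ℝ) ∧
        ∃ M : Fin N → Fin N → Bool,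
          (1 - (k : ℝ) ^ (-(1 : ℝ) / 4)) * (N : ℝ) ^ 2 ≤ (mass M : ℝ) ∧
          AvoidsPerm M π := by
  refine ⟨1 / 64, by norm_num, fun k hk => ?_⟩
  have hk0 : (0 : ℝ) ≤ k := Nat.cast_nonneg k
  rcases lt_or_ge k (2 ^ 60) with hsmall | hlarge
  · obtain ⟨π, M, hmass, hM⟩ := exists_avoidsPerm_two hk
    refine ⟨π, 2, two_pos, ?_, M, by exact_mod_cast hmass, hM⟩
    calc _ ≤ (2 : ℝ) ^ (1 : ℝ) := two_rpow_le_two_rpow_of_le_pow hk0 zero_le_one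
          (by exact_mod_cast (hsmall.trans (by norm_num : 2 ^ 60 < (64 * 1) ^ 12)).le)
      _ = ((2 : ℕ) : ℝ) := by norm_num
  · obtain ⟨m, hm, hlo, hhi⟩ := exists_le_and_le_pow_twelve hlarge
    obtain ⟨π, M, hmass, hM⟩ := exists_avoidsPerm_one_sub_inv_mul_le_mass hm hlo
    refine ⟨π, 2 ^ m, by positivity, ?_, M, ?_, hM⟩
    · calc _ ≤ (2 : ℝ) ^ (m : ℝ) :=
            two_rpow_le_two_rpow_of_le_pow hk0 m.cast_nonneg (by exact_mod_cast hhi)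
        _ = ((2 ^ m : ℕ) : ℝ) := by rw [Real.rpow_natCast]; push_cast; rfl
    · have hinv := inv_le_rpow_neg_one_div_of_le_pow (x := k) (y := (64 * m) ^ 3) (n := 4)
        (by positivity) (by positivity) (by norm_num) (by rw [← pow_mul]; exact_mod_cast hhi)
      rw [Nat.cast_ofNat] at hinv
      push_cast
      calc (1 - (k : ℝ) ^ (-(1 : ℝ) / 4)) * (2 ^ m : ℝ) ^ 2
          ≤ (1 - ((64 * m : ℝ) ^ 3)⁻¹) * (2 ^ m : ℝ) ^ 2 := by gcongr
        _ ≤ (mass M : ℝ) := hmass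
end

section
/- For every permutation π and every positive integer n, T_{2n}(π) ≤ T_n(π)·15^{ex(n,π)}. -/
open Filter

/-! Cut a `dn × dn` matrix avoiding `π` into `d × d` blocks and record which blocks are nonzero.
The resulting `n × n` matrix still avoids `π`, since a copy of a permutation matrix in it lifts to
one in the original matrix by picking a one-entry inside each block used. Conversely, over a
contracted matrix `B` each of the `mass B ≤ ex(n, π)` nonzero blocks can be filled in at most
`2 ^ (d * d) - 1` ways and the zero blocks in just one; for `d = 2` this is `15`. -/

section BlockContraction

variable {d m n : ℕ}

def blockIndex (a : Fin n) (s : Fin d) : Fin (d * n) :=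
  ⟨d * a + s, by nlinarith [a.isLt, s.isLt]⟩

lemma blockIndex_lt_blockIndex {a b : Fin n} (s t : Fin d) (h : a < b) :
    blockIndex a s < blockIndex b t := by
  rw [Fin.lt_def] at h ⊢
  have hs := s.isLt
  simp only [blockIndex]
  nlinarith

lemma exists_blockIndex_eq (x : Fin (d * n)) : ∃ a s, blockIndex (d := d) (n := n) a s = x := by
  have hd : 0 < d := Nat.pos_of_ne_zero (by rintro rfl; simpa using x.isLt)
  refine ⟨⟨x / d, Nat.div_lt_of_lt_mul x.isLt⟩, ⟨x % d, Nat.mod_lt _ hd⟩, ?_⟩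
  simp only [blockIndex, Fin.ext_iff]
  exact Nat.div_add_mod x d

def block (A : Fin (d * m) → Fin (d * n) → Bool) (i : Fin m) (j : Fin n) : Fin d → Fin d → Bool :=
  fun s t => A (blockIndex i s) (blockIndex j t)

lemma block_injective :
    Function.Injective (block : (Fin (d * m) → Fin (d * n) → Bool) → _) := by
  intro A A' h
  funext x y
  obtain ⟨i, s, rfl⟩ := exists_blockIndex_eq (d := d) (n := m) x
  obtain ⟨j, t, rfl⟩ := exists_blockIndex_eq (d := d) (n := n) y
  exact congrFun (congrFun (congrFun (congrFun h i) j) s) t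

def blockContract (A : Fin (d * m) → Fin (d * n) → Bool) : Fin m → Fin n → Bool :=
  fun i j => decide (block A i j ≠ fun _ _ => false)

lemma blockContract_eq_true_iff {A : Fin (d * m) → Fin (d * n) → Bool} {i : Fin m} {j : Fin n} :
    blockContract A i j = true ↔ ∃ s t, A (blockIndex i s) (blockIndex j t) = true := by
  simp only [blockContract, block, decide_eq_true_eq, ne_eq, funext_iff, not_forall,
    Bool.not_eq_false]

lemma blockContract_eq_false_iff {A : Fin (d * m) → Fin (d * n) → Bool} {i : Fin m} {j : Fin n} :
    blockContract A i j = false ↔ block A i j = fun _ _ => false := by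
  simp [blockContract]

lemma ContainsMat.of_blockContract {k : ℕ} {π : Equiv.Perm (Fin k)}
    {A : Fin (d * m) → Fin (d * n) → Bool} (h : ContainsMat (permMatrix π) (blockContract A)) :
    ContainsMat (permMatrix π) A := by
  obtain ⟨r, c, hr, hc, hrc⟩ := h
  have hblock (i : Fin k) : ∃ s t, A (blockIndex (r i) s) (blockIndex (c (π i)) t) = true :=
    blockContract_eq_true_iff.mp (hrc i (π i) (by simp [permMatrix]))
  choose s t hst using hblock
  refine ⟨fun i => blockIndex (r i) (s i), fun j => blockIndex (c j) (t (π.symm j)),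
    fun a b hab => blockIndex_lt_blockIndex _ _ (hr hab),
    fun a b hab => blockIndex_lt_blockIndex _ _ (hc hab), ?_⟩
  rintro i _ hij
  obtain rfl : π i = _ := by simpa [permMatrix] using hij
  simpa using hst i

lemma AvoidsPerm.blockContract {k : ℕ} {π : Equiv.Perm (Fin k)}
    {A : Fin (d * m) → Fin (d * n) → Bool} (h : AvoidsPerm A π) :
    AvoidsPerm (blockContract A) π :=
  fun hB => h hB.of_blockContract

lemma card_blockContract_fiber_le (B : Fin m → Fin n → Bool) :
    Fintype.card {A : Fin (d * m) → Fin (d * n) → Bool // blockContract A = B} ≤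
      (2 ^ (d * d) - 1) ^ mass B := by
  classical
  let NonzeroBlock := {q : Fin d → Fin d → Bool // q ≠ fun _ _ => false}
  let f : {A : Fin (d * m) → Fin (d * n) → Bool // blockContract A = B} →
      {p : Fin m × Fin n // B p.1 p.2 = true} → NonzeroBlock :=
    fun A p => ⟨block A.1 p.1.1 p.1.2,
      blockContract_eq_false_iff.not.mp (by simp [A.2, p.2])⟩
  have hf : Function.Injective f := by
    rintro ⟨A, rfl⟩ ⟨A', hA'⟩ hAA'
    refine Subtype.ext (block_injective (funext₂ fun i j => ?_))
    cases hij : blockContract A i j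
    · have hij' : blockContract A' i j = false := by rw [hA', hij]
      rw [blockContract_eq_false_iff.mp hij, blockContract_eq_false_iff.mp hij']
    · exact congrArg Subtype.val (congrFun hAA' ⟨(i, j), hij⟩)
  have hcard : Fintype.card NonzeroBlock = 2 ^ (d * d) - 1 := by
    simp [NonzeroBlock, Fintype.card_subtype_compl, pow_mul]
  calc _ ≤ Fintype.card ({p : Fin m × Fin n // B p.1 p.2 = true} → NonzeroBlock) :=
        Fintype.card_le_of_injective f hf
    _ = (2 ^ (d * d) - 1) ^ mass B := by
        rw [Fintype.card_fun, hcard, Fintype.card_subtype, mass]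

end BlockContraction

lemma mass_le_exP {k n : ℕ} {π : Equiv.Perm (Fin k)} {B : Fin n → Fin n → Bool}
    (hB : AvoidsPerm B π) : mass B ≤ exP n π := by
  refine le_csSup ⟨n * n, ?_⟩ ⟨B, hB, rfl⟩
  rintro _ ⟨A, -, rfl⟩
  simpa [mass] using Finset.card_filter_le (Finset.univ : Finset (Fin n × Fin n)) _

lemma TP_mul_le {k : ℕ} (π : Equiv.Perm (Fin k)) {d : ℕ} (hd : 0 < d) (n : ℕ) :
    TP (d * n) π ≤ TP n π * (2 ^ (d * d) - 1) ^ exP n π := by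
  classical
  rw [mul_comm (TP n π)]
  simp only [TP, Nat.card_eq_fintype_card, Fintype.card_subtype]
  have hmaps : ∀ A ∈ Finset.univ.filter (AvoidsPerm (m := d * n) (n := d * n) · π),
      blockContract A ∈ Finset.univ.filter (AvoidsPerm (m := n) (n := n) · π) := by
    simpa using fun A hA => AvoidsPerm.blockContract hA
  refine Finset.card_le_mul_card_image_of_maps_to hmaps _ fun B hB => ?_
  calc _ ≤ (Finset.univ.filter fun A => blockContract A = B).card :=
        Finset.card_le_card (Finset.monotone_filter_left _ (Finset.subset_univ _))
    _ ≤ (2 ^ (d * d) - 1) ^ mass B := by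
        rw [← Fintype.card_subtype]; exact card_blockContract_fiber_le B
    _ ≤ (2 ^ (d * d) - 1) ^ exP n π :=
        Nat.pow_le_pow_right (Nat.sub_pos_of_lt (Nat.one_lt_two_pow (by positivity)))
          (mass_le_exP (by simpa using hB))

theorem stmt11_general {k : ℕ} (π : Equiv.Perm (Fin k)) (n : ℕ) :
    TP (2 * n) π ≤ TP n π * 15 ^ exP n π :=
  TP_mul_le π two_pos n

/-- For every permutation `π` and every positive integer `n`,
`T_{2n}(π) ≤ T_n(π)·15^{ex(n,π)}`. -/
theorem stmt11 {k : ℕ} (π : Equiv.Perm (Fin k)) (n : ℕ) (hn : 0 < n) :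
    TP (2 * n) π ≤ TP n π * 15 ^ exP n π :=
  stmt11_general π n
end

section
/- For every permutation π and all positive integers n and t, setting N = tn, we have S_N(π) ≤ T_n(π)·t^{2N}. -/
open Filter

/-!
Cut `{1,…,tn}` into `n` consecutive blocks of size `t` and contract a `π`-avoiding
`σ ∈ S_{tn}` to the `n × n` matrix recording which pairs of blocks `σ` connects; it still
avoids `π` because the blocks are intervals. Each row of the contraction has at most `t`
ones, so `σ x` is determined by the contraction together with two numbers below `t`: the
position of the block of `σ x` among the blocks hit from the block of `x`, and the offset of
`σ x` inside its block. Hence `σ ↦` (contraction, offsets, positions) is an injection into a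
set of size `T_n(π) · t^N · t^N`.
-/

open Finset Function

lemma Finset.strictMonoOn_card_filter_lt {α : Type*} [LinearOrder α] (s : Finset α) :
    StrictMonoOn (fun a => #{b ∈ s | b < a}) s := by
  intro a ha b _ hab
  refine card_lt_card ((ssubset_iff_of_subset ?_).mpr ⟨a, by simpa [hab] using ha, by simp⟩)
  exact monotone_filter_right s fun c _ hc => hc.trans hab

lemma Finset.card_filter_lt_lt_card {α : Type*} [LinearOrder α] {s : Finset α} {a : α}
    (ha : a ∈ s) : #{b ∈ s | b < a} < #s :=
  card_lt_card (filter_ssubset.mpr ⟨a, ha, lt_irrefl a⟩)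

section Contraction

variable {N n : ℕ}

def contract (f : Fin N → Fin n) (σ : Equiv.Perm (Fin N)) : Fin n → Fin n → Bool :=
  fun i j => decide (∃ x, f x = i ∧ f (σ x) = j)

lemma avoidsPerm_contract {k : ℕ} {π : Equiv.Perm (Fin k)} {f : Fin N → Fin n}
    (hf : Monotone f) {σ : Equiv.Perm (Fin N)} (hσ : ¬ PermContains σ π) :
    AvoidsPerm (contract f σ) π := by
  rintro ⟨r, c, hr, hc, hrc⟩
  have hit : ∀ i, ∃ x, f x = r i ∧ f (σ x) = c (π i) := fun i => by
    simpa [contract] using hrc i (π i) (by simp [permMatrix])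
  choose x hxr hxc using hit
  have hx : StrictMono x := fun i j hij => hf.reflect_lt (by rw [hxr, hxr]; exact hr hij)
  have hσx : StrictMono (σ ∘ x ∘ π.symm) := fun a b hab =>
    hf.reflect_lt (by simpa only [comp_apply, hxc, Equiv.apply_symm_apply] using hc hab)
  exact hσ ⟨x, hx, fun i j => by simpa using hσx.lt_iff_lt (a := π i) (b := π j)⟩

def rowSupport {m : ℕ} (A : Fin m → Fin n → Bool) (i : Fin m) : Finset (Fin n) :=
  {j | A i j = true}

lemma mem_rowSupport_contract (f : Fin N → Fin n) (σ : Equiv.Perm (Fin N)) (x : Fin N) :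
    f (σ x) ∈ rowSupport (contract f σ) (f x) := by
  simpa [rowSupport, contract] using ⟨x, rfl, rfl⟩

lemma card_rowSupport_contract_le {t : ℕ} {f : Fin N → Fin n} (hf : ∀ i, #{x | f x = i} ≤ t)
    (σ : Equiv.Perm (Fin N)) (i : Fin n) : #(rowSupport (contract f σ) i) ≤ t := by
  have hsub : rowSupport (contract f σ) i ⊆ image (fun x => f (σ x)) {x | f x = i} := by
    intro j hj
    obtain ⟨x, hx, rfl⟩ := by simpa [rowSupport, contract] using hj
    exact mem_image.mpr ⟨x, by simpa using hx, rfl⟩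
  exact (card_le_card hsub).trans (card_image_le.trans (hf i))

def blockRank (f : Fin N → Fin n) (σ : Equiv.Perm (Fin N)) (x : Fin N) : ℕ :=
  #{j ∈ rowSupport (contract f σ) (f x) | j < f (σ x)}

lemma eq_of_contract_eq {t : ℕ} {f : Fin N → Fin n} {g : Fin N → Fin t}
    (hfg : Injective fun x => (f x, g x)) {σ τ : Equiv.Perm (Fin N)}
    (hA : contract f σ = contract f τ) (hg : ∀ x, g (σ x) = g (τ x))
    (hrank : blockRank f σ = blockRank f τ) : σ = τ := by
  refine Equiv.ext fun x => hfg (Prod.ext ?_ (hg x))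
  have hτ := mem_rowSupport_contract f τ x
  have hrx := congrFun hrank x
  rw [← hA] at hτ
  simp only [blockRank, ← hA] at hrx
  exact (strictMonoOn_card_filter_lt _).injOn (mem_rowSupport_contract f σ x) hτ hrx

end Contraction

theorem SP_le_TP_mul_pow {k N n t : ℕ} (π : Equiv.Perm (Fin k)) {f : Fin N → Fin n}
    {g : Fin N → Fin t} (hf : Monotone f) (hfg : Injective fun x => (f x, g x)) :
    SP N π ≤ TP n π * (t ^ N * t ^ N) := by
  classical
  have hfib : ∀ i, #{x | f x = i} ≤ t := fun i => by
    simpa using card_le_card_of_injOn g (fun _ _ => mem_univ _) fun x hx y hy hxy =>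
      hfg (Prod.ext ((mem_filter.mp hx).2.trans (mem_filter.mp hy).2.symm) hxy)
  have hrank : ∀ σ x, blockRank f σ x < t := fun σ x =>
    (card_filter_lt_lt_card (mem_rowSupport_contract f σ x)).trans_le
      (card_rowSupport_contract_le hfib σ _)
  let encode : {σ // ¬ PermContains σ π} →
      {A // AvoidsPerm A π} × (Fin N → Fin t) × (Fin N → Fin t) := fun σ =>
    (⟨contract f σ, avoidsPerm_contract hf σ.2⟩, fun x => g (σ.1 x),
      fun x => ⟨blockRank f σ x, hrank σ x⟩)
  have hencode : Injective encode := by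
    rintro ⟨σ, _⟩ ⟨τ, _⟩ h
    simp only [encode, Prod.mk.injEq, Subtype.mk.injEq, funext_iff, Fin.mk.injEq] at h
    exact Subtype.ext (eq_of_contract_eq hfg (funext₂ h.1) h.2.1 (funext h.2.2))
  simpa [SP, TP, Nat.card_prod, Nat.card_fun] using Nat.card_le_card_of_injective encode hencode

theorem stmt13_general {k : ℕ} (π : Equiv.Perm (Fin k)) (n t : ℕ) (ht : 0 < t) :
    SP (t * n) π ≤ TP n π * t ^ (2 * (t * n)) := by
  let block (x : Fin (t * n)) : Fin n := ⟨x / t, Nat.div_lt_of_lt_mul x.2⟩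
  let offset (x : Fin (t * n)) : Fin t := ⟨x % t, Nat.mod_lt _ ht⟩
  have hblock : Monotone block := fun x y hxy => Nat.div_le_div_right hxy
  have hinj : Injective fun x => (block x, offset x) := fun x y h => by
    simp only [Prod.mk.injEq, Fin.ext_iff, block, offset] at h
    exact Fin.ext (by rw [← Nat.div_add_mod x t, ← Nat.div_add_mod y t, h.1, h.2])
  simpa [two_mul, pow_add] using SP_le_TP_mul_pow π hblock hinj

/-- For every permutation `π` and all positive integers `n` and
`t`, setting `N = tn`, we have `S_N(π) ≤ T_n(π)·t^{2N}`. -/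
theorem stmt13 {k : ℕ} (π : Equiv.Perm (Fin k)) (n t : ℕ) (hn : 0 < n) (ht : 0 < t) :
    SP (t * n) π ≤ TP n π * t ^ (2 * (t * n)) :=
  stmt13_general π n t ht
end
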